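/- arXiv:2501.11295 — 10 statements merged into one kernel-verified Lean document; each statement's English description precedes it below -/
import Mathlib

section
/- Let V be a d-dimensional vector space over 𝔽₂ and let p ≥ 1. Then I_p(V) is additively generated by the elements γ_G, where G ranges over all p-dimensional linear subspaces of V; that is, I₁(V)^p equals the 𝔽₂-linear span of the set {γ_G : G a linear subspace of V with dim G = p}. -/
open Finset

/-- The group algebra `𝔽₂[V]` of an additive group `V`. -/
abbrev GroupAlg (V : Type*) [AddCommGroup V] := AddMonoidAlgebra (ZMod 2) V

/-- The augmentation ideal `I₁(V)`: the kernel of the algebra map `𝔽₂[V] → 𝔽₂`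
sending every basis element `T_v` to `1`. -/
noncomputable def augIdeal (V : Type*) [AddCommGroup V] : Ideal (GroupAlg V) :=
  RingHom.ker (AddMonoidAlgebra.lift (ZMod 2) (ZMod 2) V 1)

/-- `γ_G = Σ_{v ∈ G} T_v` for a subset `G ⊆ V`. -/
noncomputable def gammaSet {V : Type*} [AddCommGroup V] [Fintype V] (G : Set V) :
    GroupAlg V :=
  ∑ v ∈ (Set.toFinite G).toFinset, AddMonoidAlgebra.single v (1 : ZMod 2)

open Pointwise

/-!
The augmentation ideal is generated by the elements `T_g - 1`, so `I^p` is the ideal generated by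
the `p`-fold products of them. That ideal is already their additive span, because
`T_w (T_a - 1) = (T_{w+a} - 1) - (T_w - 1)`. Over `𝔽₂` a product `∏ (T_{v_i} - 1)` expands to
`∑_{c ∈ 𝔽₂ⁿ} T_{Σ cᵢ vᵢ}`: for independent `vᵢ` this is `γ` of their span, and for dependent `vᵢ`
the terms at `c` and `c + c₀`, for a relation `c₀`, cancel in pairs.
-/

theorem Set.range_pow {M ι : Type*} [CommMonoid M] (f : ι → M) (n : ℕ) :
    Set.range f ^ n = Set.range fun v : Fin n → ι => ∏ i, f (v i) := by
  ext x
  rw [Set.mem_pow, Set.mem_range]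
  constructor
  · rintro ⟨g, rfl⟩
    choose v hv using fun i => (g i).2
    exact ⟨v, by simp [List.prod_ofFn, hv]⟩
  · rintro ⟨v, rfl⟩
    exact ⟨fun i => ⟨f (v i), v i, rfl⟩, by rw [List.prod_ofFn]⟩

theorem Ideal.coe_span_eq_span_of_mul_mem {k A : Type*} [CommSemiring k] [CommSemiring A]
    [Algebra k A] {B S : Set A} (hB : Submodule.span k B = ⊤)
    (hBS : ∀ b ∈ B, ∀ s ∈ S, b * s ∈ Submodule.span k S) :
    (Ideal.span S : Set A) = Submodule.span k S := by
  have hmul : ∀ a x, x ∈ Submodule.span k S → a * x ∈ Submodule.span k S := by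
    intro a x hx
    have ha : a ∈ Submodule.span k B := hB ▸ Submodule.mem_top
    induction ha using Submodule.span_induction with
    | mem b hb =>
      induction hx using Submodule.span_induction with
      | mem s hs => exact hBS b hb s hs
      | zero => simp
      | add x y _ _ hx hy => rw [mul_add]; exact add_mem hx hy
      | smul c x _ hx => rw [mul_smul_comm]; exact Submodule.smul_mem _ c hx
    | zero => simp
    | add a a' _ _ ha ha' => rw [add_mul]; exact add_mem ha ha'
    | smul c a _ ha => rw [smul_mul_assoc]; exact Submodule.smul_mem _ c ha
  refine subset_antisymm (fun x hx => ?_) (Submodule.span_subset_span k A S)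
  induction hx using Submodule.span_induction with
  | mem s hs => exact Submodule.subset_span hs
  | zero => exact zero_mem _
  | add x y _ _ hx hy => exact add_mem hx hy
  | smul a x _ hx => exact hmul a x hx

theorem Fintype.sum_comp_eq_zero_of_not_injective {M N A : Type*} [AddCommGroup M]
    [Module (ZMod 2) M] [Fintype M] [AddGroup N] [AddCommGroup A] [Module (ZMod 2) A]
    (φ : M →+ N) (hφ : ¬ Function.Injective φ) (f : N → A) : ∑ m, f (φ m) = 0 := by
  obtain ⟨c, hc, hc0⟩ : ∃ c, φ c = 0 ∧ c ≠ 0 := by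
    simpa [injective_iff_map_eq_zero, and_comm] using hφ
  refine Finset.sum_ninvolution (· + c) (fun m => ?_) (fun m _ => by simpa using hc0)
    (fun _ => mem_univ _) (fun m => by rw [add_assoc, ZModModule.add_self, add_zero])
  rw [map_add, hc, add_zero, ZModModule.add_self]

namespace AddMonoidAlgebra

variable {k G : Type*} [CommRing k]

theorem span_range_single_one :
    Submodule.span k (Set.range fun g : G => single g (1 : k)) = ⊤ :=
  (basis G k).span_eq

variable [AddCommMonoid G]

theorem ker_lift_one_eq_span :
    RingHom.ker (lift k k G 1) = Ideal.span (Set.range fun g : G => single g (1 : k) - 1) := by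
  refine le_antisymm (fun x hx => ?_) (Ideal.span_le.mpr ?_)
  · have hsub : ∀ y : k[G], y - algebraMap k k[G] (lift k k G 1 y) ∈
        Ideal.span (Set.range fun g : G => single g (1 : k) - 1) := by
      intro y
      induction y using induction_linear with
      | zero => simp
      | add y z hy hz => simpa [add_sub_add_comm] using add_mem hy hz
      | single g c =>
        have : single g c - algebraMap k k[G] c = c • (single g 1 - 1) := by
          rw [smul_sub, smul_single, smul_eq_mul, mul_one, Algebra.algebraMap_eq_smul_one]
        rw [lift_single, MonoidHom.one_apply, smul_eq_mul, mul_one, this]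
        exact Submodule.smul_of_tower_mem _ c (Ideal.subset_span (Set.mem_range_self g))
    simpa [RingHom.mem_ker.mp hx] using hsub x
  · rintro - ⟨g, rfl⟩
    simp [lift_single, one_def]

theorem single_one_mul_single_sub_one (g h : G) :
    single g (1 : k) * (single h 1 - 1) = (single (g + h) 1 - 1) - (single g 1 - 1) := by
  rw [mul_sub, single_mul_single, one_mul, mul_one, sub_sub_sub_cancel_right]

variable (k G) in
def singleSubOneProds (n : ℕ) : Set k[G] :=
  Set.range fun v : Fin n → G => ∏ i, (single (v i) (1 : k) - 1)

theorem ker_lift_one_pow_eq_span_singleSubOneProds (n : ℕ) :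
    RingHom.ker (lift k k G 1) ^ n = Ideal.span (singleSubOneProds k G n) := by
  rw [ker_lift_one_eq_span, Ideal.span, Submodule.span_pow, Set.range_pow]
  rfl

theorem coe_ideal_span_singleSubOneProds {n : ℕ} (hn : n ≠ 0) :
    (Ideal.span (singleSubOneProds k G n) : Set k[G]) =
      Submodule.span k (singleSubOneProds k G n) := by
  obtain ⟨m, rfl⟩ := Nat.exists_eq_succ_of_ne_zero hn
  refine Ideal.coe_span_eq_span_of_mul_mem span_range_single_one ?_
  rintro - ⟨g, rfl⟩ - ⟨v, rfl⟩
  dsimp only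
  rw [Fin.prod_univ_succ, ← mul_assoc, single_one_mul_single_sub_one, sub_mul]
  refine sub_mem (Submodule.subset_span ⟨Fin.cons (g + v 0) (Fin.tail v), ?_⟩)
    (Submodule.subset_span ⟨Fin.cons g (Fin.tail v), ?_⟩) <;>
  simp [Fin.prod_univ_succ, Fin.tail]

end AddMonoidAlgebra

namespace AddMonoidAlgebra

variable {V : Type*} [AddCommGroup V] [Module (ZMod 2) V]

theorem single_sub_one_eq_sum_smul (v : V) :
    (single v 1 - 1 : GroupAlg V) = ∑ c : ZMod 2, single (c • v) 1 := by
  rw [ZModModule.sub_eq_add, show (univ : Finset (ZMod 2)) = {0, 1} from rfl,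
    sum_pair zero_ne_one, one_def]
  simp [add_comm]

theorem prod_single_sub_one_eq_sum {n : ℕ} (v : Fin n → V) :
    ∏ i, (single (v i) 1 - 1 : GroupAlg V) =
      ∑ c : Fin n → ZMod 2, single (Fintype.linearCombination (ZMod 2) v c) 1 := by
  simp_rw [single_sub_one_eq_sum_smul, Finset.prod_univ_sum, Fintype.piFinset_univ, prod_single,
    prod_const_one, Fintype.linearCombination_apply]

theorem prod_single_sub_one_of_not_linearIndependent {n : ℕ} {v : Fin n → V}
    (hv : ¬ LinearIndependent (ZMod 2) v) : ∏ i, (single (v i) 1 - 1 : GroupAlg V) = 0 := by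
  rw [prod_single_sub_one_eq_sum]
  exact Fintype.sum_comp_eq_zero_of_not_injective (A := GroupAlg V)
    (Fintype.linearCombination (ZMod 2) v).toAddMonoidHom
    (mt (linearIndependent_iff_injective_fintypeLinearCombination (R := ZMod 2)).mpr hv)
    fun x => single x 1

theorem prod_single_sub_one_of_linearIndependent [Fintype V] {n : ℕ} {v : Fin n → V}
    (hv : LinearIndependent (ZMod 2) v) :
    ∏ i, (single (v i) 1 - 1 : GroupAlg V) =
      gammaSet (Submodule.span (ZMod 2) (Set.range v) : Set V) := by
  classical
  have himage : (Set.toFinite (Submodule.span (ZMod 2) (Set.range v) : Set V)).toFinset =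
      univ.image (Fintype.linearCombination (ZMod 2) v) := by
    ext x
    simp [← Fintype.range_linearCombination]
  rw [prod_single_sub_one_eq_sum, gammaSet, himage,
    sum_image hv.fintypeLinearCombination_injective.injOn]

theorem span_singleSubOneProds_eq_span_gammaSet [Fintype V] (n : ℕ) :
    Submodule.span (ZMod 2) (singleSubOneProds (ZMod 2) V n) =
      Submodule.span (ZMod 2) {x : GroupAlg V | ∃ G : Submodule (ZMod 2) V,
        Module.finrank (ZMod 2) G = n ∧ x = gammaSet (G : Set V)} := by
  refine le_antisymm (Submodule.span_le.mpr ?_) (Submodule.span_le.mpr ?_)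
  · rintro - ⟨v, rfl⟩
    by_cases hv : LinearIndependent (ZMod 2) v
    · refine Submodule.subset_span ⟨_, ?_, prod_single_sub_one_of_linearIndependent hv⟩
      rw [finrank_span_eq_card hv, Fintype.card_fin]
    · simp [prod_single_sub_one_of_not_linearIndependent hv]
  · rintro - ⟨G, hG, rfl⟩
    let b := Module.finBasisOfFinrankEq (ZMod 2) G hG
    have hspan : Submodule.span (ZMod 2) (Set.range (G.subtype ∘ b)) = G := by
      rw [Set.range_comp, Submodule.span_image, b.span_eq, Submodule.map_subtype_top]
    refine Submodule.subset_span ⟨G.subtype ∘ b, ?_⟩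
    dsimp only
    rw [prod_single_sub_one_of_linearIndependent
      (b.linearIndependent.map' G.subtype G.ker_subtype), hspan]

end AddMonoidAlgebra

open AddMonoidAlgebra

theorem quillen_generated_by_subspaces_general
    (p : ℕ) (hp : 1 ≤ p)
    (V : Type*) [AddCommGroup V] [Module (ZMod 2) V] [Fintype V] :
    ((augIdeal V ^ p : Ideal (GroupAlg V)) : Set (GroupAlg V)) =
      (Submodule.span (ZMod 2)
        {x : GroupAlg V | ∃ G : Submodule (ZMod 2) V,
          Module.finrank (ZMod 2) G = p ∧ x = gammaSet (G : Set V)} :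
        Submodule (ZMod 2) (GroupAlg V)) := by
  rw [augIdeal, ker_lift_one_pow_eq_span_singleSubOneProds,
    coe_ideal_span_singleSubOneProds (by omega), span_singleSubOneProds_eq_span_gammaSet]

/-- `I_p(V)` is additively generated by the `γ_G`'s where `G` ranges over
`p`-dimensional linear subspaces of `V`. -/
theorem quillen_generated_by_subspaces
    (d p : ℕ) (hp : 1 ≤ p)
    (V : Type*) [AddCommGroup V] [Module (ZMod 2) V] [Fintype V]
    (hd : Module.finrank (ZMod 2) V = d) :
    ((augIdeal V ^ p : Ideal (GroupAlg V)) : Set (GroupAlg V)) =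
      (Submodule.span (ZMod 2)
        {x : GroupAlg V | ∃ G : Submodule (ZMod 2) V,
          Module.finrank (ZMod 2) G = p ∧ x = gammaSet (G : Set V)} :
        Submodule (ZMod 2) (GroupAlg V)) :=
  quillen_generated_by_subspaces_general p hp V
end

section
/- Let V be a d-dimensional vector space over 𝔽₂. Then for every p ≥ 0, dim_{𝔽₂} I_p(V) − dim_{𝔽₂} I_{p+1}(V) = C(d, p), the binomial coefficient d choose p. -/
open Finset

/-!
Fix a basis `b₁, …, b_d` of `V` and put `xᵢ = T_{bᵢ} - 1 ∈ I₁(V)`. Since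
`T_{Σ_{i ∈ S} bᵢ} = ∏_{i ∈ S} (xᵢ + 1) = Σ_{T ⊆ S} x_T`, the square-free monomials `x_S` span
`𝔽₂[V]`, and as there are `2^d = dim 𝔽₂[V]` of them they form a basis. In characteristic 2,
`xᵢ² = T_{2bᵢ} + 1 = 0`, so `x_S x_T` is `x_{S ∪ T}` or `0`. The augmentation reads off the
coefficient of `x_∅ = 1`, so `I₁(V)` is spanned by the `x_S` with `S ≠ ∅`, and by induction `I_p(V)`
is spanned by the `x_S` with `|S| ≥ p`. Hence `I_p(V) / I_{p+1}(V)` has the `C(d, p)` monomials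
`x_S` with `|S| = p` as a basis.
-/

theorem Module.Basis.finrank_span_image {ι R M : Type*} [Semiring R] [StrongRankCondition R]
    [Nontrivial R] [AddCommMonoid M] [Module R M] (b : Module.Basis ι R M) (s : Set ι)
    [Fintype s] : Module.finrank R (Submodule.span R (b '' s)) = Fintype.card s := by
  rw [Set.image_eq_range]
  exact finrank_span_eq_card (b.linearIndependent.comp _ Subtype.val_injective)

theorem Finset.card_filter_le_card_eq_add_choose {α : Type*} [Fintype α] (p : ℕ) :
    #{S : Finset α | p ≤ #S} = #{S : Finset α | p + 1 ≤ #S} + (Fintype.card α).choose p := by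
  classical
  rw [← card_univ, ← card_powersetCard, powersetCard_eq_filter, powerset_univ,
    ← card_union_of_disjoint (disjoint_filter.2 fun S _ h h' => by omega)]
  congr 1
  ext S
  simp only [mem_filter, mem_union, mem_univ, true_and]
  omega

namespace GroupAlg

open AddMonoidAlgebra

variable {V : Type*} [AddCommGroup V]

noncomputable abbrev augmentation (V : Type*) [AddCommGroup V] : GroupAlg V →ₐ[ZMod 2] ZMod 2 :=
  lift (ZMod 2) (ZMod 2) V 1

theorem mem_augIdeal {x : GroupAlg V} : x ∈ augIdeal V ↔ augmentation V x = 0 :=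
  RingHom.mem_ker

theorem augmentation_single (v : V) : augmentation V (single v 1) = 1 := by
  simp [lift_single]

variable [Module (ZMod 2) V] {ι : Type*} (B : Module.Basis ι (ZMod 2) V)

noncomputable def gen (i : ι) : GroupAlg V := single (B i) 1 - 1

noncomputable def monomial (S : Finset ι) : GroupAlg V := ∏ i ∈ S, gen B i

theorem gen_mul_self (i : ι) : gen B i * gen B i = 0 := by
  have hsq : single (B i) 1 * single (B i) 1 = (1 : GroupAlg V) := by
    rw [single_mul_single, ZModModule.add_self, mul_one, one_def]
  calc gen B i * gen B i
      = single (B i) 1 * single (B i) 1 - (single (B i) 1 + single (B i) 1) + 1 := by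
        rw [gen]; ring
    _ = 0 := by rw [hsq, ZModModule.add_self, sub_zero, ZModModule.add_self]

theorem augmentation_gen (i : ι) : augmentation V (gen B i) = 0 := by
  rw [gen, map_sub, augmentation_single, map_one, sub_self]

theorem gen_mem_augIdeal (i : ι) : gen B i ∈ augIdeal V :=
  mem_augIdeal.2 (augmentation_gen B i)

theorem augmentation_monomial [DecidableEq ι] (S : Finset ι) :
    augmentation V (monomial B S) = if S = ∅ then 1 else 0 := by
  split_ifs with hS
  · rw [hS, monomial, prod_empty, map_one]
  · obtain ⟨i, hi⟩ := nonempty_iff_ne_empty.2 hS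
    rw [monomial, map_prod]
    exact prod_eq_zero hi (augmentation_gen B i)

theorem monomial_mem_augIdeal_pow (S : Finset ι) : monomial B S ∈ augIdeal V ^ #S := by
  induction S using Finset.cons_induction with
  | empty => simp [monomial]
  | cons i S hi ih =>
    rw [monomial, prod_cons, card_cons, pow_succ']
    exact Ideal.mul_mem_mul (gen_mem_augIdeal B i) ih

theorem monomial_mul_of_disjoint [DecidableEq ι] {S T : Finset ι} (h : Disjoint S T) :
    monomial B S * monomial B T = monomial B (S ∪ T) :=
  (prod_union h).symm

theorem monomial_mul_of_not_disjoint {S T : Finset ι} (h : ¬ Disjoint S T) :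
    monomial B S * monomial B T = 0 := by
  classical
  obtain ⟨i, hiS, hiT⟩ := not_disjoint_iff.1 h
  rw [monomial, monomial, ← mul_prod_erase S _ hiS, ← mul_prod_erase T _ hiT,
    mul_mul_mul_comm, gen_mul_self, zero_mul]

theorem single_sum_eq_sum_monomial [DecidableEq ι] (S : Finset ι) :
    single (∑ i ∈ S, B i) 1 = ∑ T ∈ S.powerset, monomial B T :=
  calc single (∑ i ∈ S, B i) 1
      = ∏ i ∈ S, single (B i) 1 := by rw [prod_single, prod_const_one]
    _ = ∏ i ∈ S, (gen B i + 1) := by simp only [gen, sub_add_cancel]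
    _ = ∑ T ∈ S.powerset, monomial B T := prod_add_one S

theorem exists_sum_eq (v : V) : ∃ S : Finset ι, ∑ i ∈ S, B i = v := by
  refine ⟨(B.repr v).support, ?_⟩
  conv_rhs => rw [← B.linearCombination_repr v, Finsupp.linearCombination_apply, Finsupp.sum]
  refine sum_congr rfl fun i hi => ?_
  have hi : B.repr v i = 1 := Fin.eq_one_of_ne_zero _ (Finsupp.mem_support_iff.1 hi)
  rw [hi, one_smul]

theorem top_le_span_monomial : ⊤ ≤ Submodule.span (ZMod 2) (Set.range (monomial B)) := by
  classical
  rw [← (AddMonoidAlgebra.basis V (ZMod 2)).span_eq, Submodule.span_le]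
  rintro _ ⟨v, rfl⟩
  obtain ⟨S, rfl⟩ := exists_sum_eq B v
  rw [AddMonoidAlgebra.basis_apply, single_sum_eq_sum_monomial]
  exact Submodule.sum_mem _ fun T _ => Submodule.subset_span ⟨T, rfl⟩

theorem finrank_groupAlg [Module.Finite (ZMod 2) V] :
    Module.finrank (ZMod 2) (GroupAlg V) = 2 ^ Module.finrank (ZMod 2) V := by
  rw [Module.finrank_eq_nat_card_basis (AddMonoidAlgebra.basis V (ZMod 2)),
    Module.natCard_eq_pow_finrank (K := ZMod 2), Nat.card_zmod]

variable [Fintype ι]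

noncomputable def monomialBasis : Module.Basis (Finset ι) (ZMod 2) (GroupAlg V) :=
  .mk (linearIndependent_of_top_le_span_of_card_eq_finrank (top_le_span_monomial B)
    (by
      have := Module.Finite.of_basis B
      rw [Fintype.card_finset, finrank_groupAlg, Module.finrank_eq_card_basis B]))
    (top_le_span_monomial B)

theorem coe_monomialBasis : ⇑(monomialBasis B) = monomial B :=
  Module.Basis.coe_mk _ _

theorem augmentation_eq_coord_empty [DecidableEq ι] :
    (augmentation V).toLinearMap = (monomialBasis B).coord ∅ :=
  (monomialBasis B).ext fun S => by
    rw [Module.Basis.coord_apply, Module.Basis.repr_self, Finsupp.single_apply,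
      AlgHom.toLinearMap_apply, coe_monomialBasis, augmentation_monomial]

noncomputable def monomialFiltration (p : ℕ) : Submodule (ZMod 2) (GroupAlg V) :=
  Submodule.span (ZMod 2) (monomialBasis B '' {S | p ≤ #S})

theorem monomialFiltration_mul_le (p q : ℕ) :
    monomialFiltration B p * monomialFiltration B q ≤ monomialFiltration B (p + q) := by
  classical
  rw [monomialFiltration, monomialFiltration, Submodule.span_mul_span, Submodule.span_le]
  rintro _ ⟨_, ⟨S, hS, rfl⟩, _, ⟨T, hT, rfl⟩, rfl⟩
  dsimp only
  rw [coe_monomialBasis]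
  by_cases h : Disjoint S T
  · rw [monomial_mul_of_disjoint B h, ← coe_monomialBasis]
    refine Submodule.subset_span ⟨S ∪ T, ?_, rfl⟩
    show p + q ≤ #(S ∪ T)
    rw [card_union_of_disjoint h]
    exact add_le_add hS hT
  · rw [monomial_mul_of_not_disjoint B h]
    exact zero_mem _

theorem augIdeal_le_monomialFiltration_one :
    (augIdeal V).restrictScalars (ZMod 2) ≤ monomialFiltration B 1 := by
  classical
  intro x hx
  rw [monomialFiltration, Module.Basis.mem_span_image]
  intro S hS
  have h0 : (monomialBasis B).repr x ∅ = 0 := by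
    rw [← Module.Basis.coord_apply, ← augmentation_eq_coord_empty]
    exact mem_augIdeal.1 hx
  show 1 ≤ #S
  rw [one_le_card, nonempty_iff_ne_empty]
  rintro rfl
  exact Finsupp.mem_support_iff.1 hS h0

theorem restrictScalars_augIdeal_pow (p : ℕ) :
    (augIdeal V ^ p).restrictScalars (ZMod 2) = monomialFiltration B p := by
  refine le_antisymm ?_ (Submodule.span_le.2 ?_)
  · induction p with
    | zero => exact fun x _ => (Module.Basis.mem_span_image _).2 fun S _ => Nat.zero_le _
    | succ p ih =>
      intro x hx
      rw [Submodule.restrictScalars_mem, pow_succ] at hx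
      refine Submodule.mul_induction_on hx (fun m hm n hn => ?_) fun _ _ => add_mem
      exact monomialFiltration_mul_le B p 1
        (Submodule.mul_mem_mul (ih hm) (augIdeal_le_monomialFiltration_one B hn))
  · rintro _ ⟨S, hS, rfl⟩
    rw [coe_monomialBasis]
    exact Ideal.pow_le_pow_right hS (monomial_mem_augIdeal_pow B S)

theorem finrank_monomialFiltration (p : ℕ) :
    Module.finrank (ZMod 2) (monomialFiltration B p) = #{S : Finset ι | p ≤ #S} := by
  rw [monomialFiltration, Module.Basis.finrank_span_image, Fintype.card_subtype]
  rfl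

end GroupAlg

/-- For a `d`-dimensional `𝔽₂`-vector space `V` and every `p ≥ 0`,
`dim I_p(V) − dim I_{p+1}(V) = C(d, p)`. Since `I_{p+1}(V) ⊆ I_p(V)`, this is
stated in the equivalent form `dim I_p(V) = dim I_{p+1}(V) + C(d, p)`. -/
theorem quillen_graded_dimension
    (d p : ℕ)
    (V : Type*) [AddCommGroup V] [Module (ZMod 2) V] [Fintype V]
    (hd : Module.finrank (ZMod 2) V = d) :
    Module.finrank (ZMod 2)
        (Submodule.restrictScalars (ZMod 2) (augIdeal V ^ p : Ideal (GroupAlg V)))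
      = Module.finrank (ZMod 2)
          (Submodule.restrictScalars (ZMod 2) (augIdeal V ^ (p + 1) : Ideal (GroupAlg V)))
        + Nat.choose d p := by
  subst hd
  let B := Module.finBasis (ZMod 2) V
  rw [GroupAlg.restrictScalars_augIdeal_pow B, GroupAlg.restrictScalars_augIdeal_pow B,
    GroupAlg.finrank_monomialFiltration, GroupAlg.finrank_monomialFiltration,
    Finset.card_filter_le_card_eq_add_choose, Fintype.card_fin]
end

section
/- Let V be a d-dimensional vector space over 𝔽₂ and let p ≥ 1. Then I_p(V) equals the 𝔽₂-linear span of the elements γ_U, where U ranges over all p-dimensional affine subspaces of V (cosets U = v + G with G a p-dimensional linear subspace of V). -/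
open Finset

/-!
Multiplying by `T_v` translates a set by `v`, so in characteristic two
`(T_v + 1) · γ_{w+G}` vanishes when `v ∈ G` and equals `γ_{w + (G ⊔ 𝔽₂v)}` when `v ∉ G`.
Iterating over a basis `v₁, …, v_p` of `G` gives `γ_{w+G} = T_w ∏ᵢ (T_{vᵢ} + 1) ∈ I^p`.
Conversely `I` is spanned by the elements `T_v + 1` and `𝔽₂[V]` by the `T_w = γ_{w+0}`, so the
same identity shows by induction on `p` that `I^p = I · I^{p-1}` lies in the span of the
`γ_U` with `dim U = p`.
-/

open AddMonoidAlgebra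

theorem GroupAlg.add_self {V : Type*} [AddCommGroup V] (x : GroupAlg V) : x + x = 0 := by
  rw [← two_smul (ZMod 2), show (2 : ZMod 2) = 0 from rfl, zero_smul]

section GammaSet

variable {V : Type*} [AddCommGroup V] [Fintype V]

theorem gammaSet_singleton (w : V) : gammaSet {w} = single w 1 := by
  simp [gammaSet]

theorem gammaSet_union {S T : Set V} (h : Disjoint S T) :
    gammaSet (S ∪ T) = gammaSet S + gammaSet T := by
  classical
  rw [gammaSet, Set.Finite.toFinset_union (Set.toFinite S) (Set.toFinite T)]
  exact Finset.sum_union (Set.Finite.disjoint_toFinset.mpr h)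

theorem single_mul_gammaSet (w : V) (S : Set V) :
    single w 1 * gammaSet S = gammaSet ((w + ·) '' S) := by
  classical
  rw [gammaSet, gammaSet, Set.Finite.toFinset_image _ (Set.toFinite S),
    Finset.sum_image fun a _ b _ h => add_left_cancel h, Finset.mul_sum]
  simp [single_mul_single]

end GammaSet

section Cosets

variable {V : Type*} [AddCommGroup V]

theorem image_add_coset_of_mem {R : Type*} [Ring R] [Module R V] {G : Submodule R V} {v : V}
    (hv : v ∈ G) (w : V) :
    (v + ·) '' ((w + ·) '' (G : Set V)) = (w + ·) '' (G : Set V) := by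
  ext x
  simp only [Set.image_image, Set.mem_image, SetLike.mem_coe]
  constructor
  · rintro ⟨g, hg, rfl⟩
    exact ⟨v + g, G.add_mem hv hg, by abel⟩
  · rintro ⟨g, hg, rfl⟩
    exact ⟨g - v, G.sub_mem hg hv, by abel⟩

theorem coe_sup_span_singleton [Module (ZMod 2) V] (G : Submodule (ZMod 2) V) (v : V) :
    ((G ⊔ Submodule.span (ZMod 2) {v} : Submodule (ZMod 2) V) : Set V) =
      (G : Set V) ∪ (v + ·) '' G := by
  ext x
  simp only [SetLike.mem_coe, Submodule.mem_sup, Submodule.mem_span_singleton, Set.mem_union,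
    Set.mem_image]
  constructor
  · rintro ⟨g, hg, _, ⟨c, rfl⟩, rfl⟩
    obtain rfl | rfl : c = 0 ∨ c = 1 := by decide +revert
    · left; simpa using hg
    · right; exact ⟨g, hg, by rw [one_smul, add_comm]⟩
  · rintro (hx | ⟨g, hg, rfl⟩)
    · exact ⟨x, hx, 0, ⟨0, zero_smul _ _⟩, add_zero x⟩
    · exact ⟨g, hg, v, ⟨1, one_smul _ _⟩, add_comm g v⟩

theorem disjoint_coset_add_of_notMem {R : Type*} [Ring R] [Module R V] {G : Submodule R V}
    {v : V} (hv : v ∉ G) (w : V) :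
    Disjoint ((w + ·) '' (G : Set V)) ((w + ·) '' ((v + ·) '' G)) := by
  rw [Set.disjoint_image_iff (add_right_injective w), Set.disjoint_left]
  rintro x hx ⟨g, hg, rfl⟩
  exact hv (by simpa using G.sub_mem hx hg)

end Cosets

section Multiplication

variable {V : Type*} [AddCommGroup V] [Module (ZMod 2) V] [Fintype V]

theorem single_add_one_mul_gammaSet_coset_of_mem {G : Submodule (ZMod 2) V} {v : V}
    (hv : v ∈ G) (w : V) : (single v 1 + 1) * gammaSet ((w + ·) '' (G : Set V)) = 0 := by
  rw [add_mul, one_mul, single_mul_gammaSet, image_add_coset_of_mem hv, GroupAlg.add_self]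

theorem single_add_one_mul_gammaSet_coset_of_notMem {G : Submodule (ZMod 2) V} {v : V}
    (hv : v ∉ G) (w : V) :
    (single v 1 + 1) * gammaSet ((w + ·) '' (G : Set V)) =
      gammaSet ((w + ·) '' (↑(G ⊔ Submodule.span (ZMod 2) {v}) : Set V)) := by
  have hcomm : (w + ·) '' ((v + ·) '' (G : Set V)) = (v + ·) '' ((w + ·) '' G) := by
    simp only [Set.image_image, add_left_comm]
  rw [coe_sup_span_singleton, Set.image_union, gammaSet_union (disjoint_coset_add_of_notMem hv w),
    hcomm, add_mul, one_mul, single_mul_gammaSet, add_comm]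

end Multiplication

section Augmentation

variable {V : Type*} [AddCommGroup V]

theorem single_add_one_mem_augIdeal (v : V) : single v 1 + 1 ∈ augIdeal V := by
  simp only [augIdeal, RingHom.mem_ker, map_add, map_one, lift_single, MonoidHom.one_apply,
    smul_eq_mul, mul_one]
  rfl

theorem augIdeal_le_span_single_add_one :
    (augIdeal V).restrictScalars (ZMod 2) ≤
      Submodule.span (ZMod 2) (Set.range fun v : V => single v (1 : ZMod 2) + 1) := by
  intro x hx
  have key : ∀ y : GroupAlg V,
      y + algebraMap (ZMod 2) _ (lift (ZMod 2) (ZMod 2) V 1 y) ∈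
        Submodule.span (ZMod 2) (Set.range fun v : V => single v (1 : ZMod 2) + 1) := by
    intro y
    induction y using AddMonoidAlgebra.induction_linear with
    | zero => simp
    | add y z hy hz =>
      convert add_mem hy hz using 1
      rw [map_add, map_add]
      abel
    | single v c =>
      convert Submodule.smul_mem _ c (Submodule.subset_span (Set.mem_range_self v)) using 1
      simp [lift_single, smul_add, Algebra.algebraMap_eq_smul_one]
  simpa [show lift (ZMod 2) (ZMod 2) V 1 x = 0 from hx] using key x

end Augmentation

section Main

variable {V : Type*} [AddCommGroup V] [Module (ZMod 2) V] [Fintype V]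

theorem gammaSet_coset_span_eq_mul_prod (w : V) {s : Finset V}
    (hs : LinearIndepOn (ZMod 2) id (s : Set V)) :
    gammaSet ((w + ·) '' (Submodule.span (ZMod 2) (s : Set V) : Set V)) =
      single w 1 * ∏ v ∈ s, (single v 1 + 1) := by
  classical
  induction s using Finset.induction_on with
  | empty => simp [gammaSet_singleton]
  | insert a s ha ih =>
    rw [Finset.coe_insert, linearIndepOn_id_insert (by simpa using ha)] at hs
    rw [Finset.prod_insert ha, mul_left_comm, ← ih hs.1, Finset.coe_insert, Submodule.span_insert,
      sup_comm, single_add_one_mul_gammaSet_coset_of_notMem hs.2]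

theorem gammaSet_coset_mem_augIdeal_pow (G : Submodule (ZMod 2) V) (w : V) :
    gammaSet ((w + ·) '' (G : Set V)) ∈ augIdeal V ^ Module.finrank (ZMod 2) G := by
  obtain ⟨b, -, hspan, hb⟩ := exists_linearIndependent (ZMod 2) (G : Set V)
  set s := (Set.toFinite b).toFinset
  have hs : LinearIndepOn (ZMod 2) id (s : Set V) := by rw [Set.Finite.coe_toFinset]; exact hb
  have hG : Submodule.span (ZMod 2) (s : Set V) = G := by
    rw [Set.Finite.coe_toFinset, hspan, Submodule.span_eq]
  rw [← hG, gammaSet_coset_span_eq_mul_prod w hs, finrank_span_finset_eq_card hs,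
    ← Finset.prod_const]
  exact Ideal.mul_mem_left _ _ (Ideal.prod_mem_prod fun v _ => single_add_one_mem_augIdeal v)

variable (V) in
def gammaAffineSubspaces (p : ℕ) : Set (GroupAlg V) :=
  {x | ∃ (v : V) (G : Submodule (ZMod 2) V),
    Module.finrank (ZMod 2) G = p ∧ x = gammaSet ((v + ·) '' (G : Set V))}

theorem single_add_one_mul_mem_span_gammaAffineSubspaces {p : ℕ} (v : V) {x : GroupAlg V}
    (hx : x ∈ gammaAffineSubspaces V p) :
    (single v 1 + 1) * x ∈ Submodule.span (ZMod 2) (gammaAffineSubspaces V (p + 1)) := by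
  obtain ⟨w, G, rfl, rfl⟩ := hx
  by_cases hv : v ∈ G
  · rw [single_add_one_mul_gammaSet_coset_of_mem hv]
    exact zero_mem _
  · rw [single_add_one_mul_gammaSet_coset_of_notMem hv]
    exact Submodule.subset_span ⟨w, _, Submodule.finrank_sup_span_singleton hv, rfl⟩

theorem augIdeal_pow_le_span_gammaAffineSubspaces (p : ℕ) :
    (augIdeal V ^ p).restrictScalars (ZMod 2) ≤
      Submodule.span (ZMod 2) (gammaAffineSubspaces V p) := by
  induction p with
  | zero =>
    rintro x -
    induction x using AddMonoidAlgebra.induction_linear with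
    | zero => exact zero_mem _
    | add y z hy hz => exact add_mem hy hz
    | single w c =>
      rw [← mul_one c, ← smul_single']
      refine Submodule.smul_mem _ c (Submodule.subset_span ⟨w, ⊥, finrank_bot _ _, ?_⟩)
      simp [gammaSet_singleton]
  | succ p ih =>
    rw [pow_succ', Ideal.restrictScalars_mul]
    calc _ ≤ Submodule.span (ZMod 2) (Set.range fun v : V => single v (1 : ZMod 2) + 1) *
          Submodule.span (ZMod 2) (gammaAffineSubspaces V p) :=
          mul_le_mul' augIdeal_le_span_single_add_one ih
      _ ≤ _ := by
        rw [Submodule.span_mul_span, Submodule.span_le]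
        rintro _ ⟨_, ⟨v, rfl⟩, x, hx, rfl⟩
        exact single_add_one_mul_mem_span_gammaAffineSubspaces v hx

theorem span_gammaAffineSubspaces_le_augIdeal_pow (p : ℕ) :
    Submodule.span (ZMod 2) (gammaAffineSubspaces V p) ≤
      (augIdeal V ^ p).restrictScalars (ZMod 2) := by
  rw [Submodule.span_le]
  rintro _ ⟨w, G, rfl, rfl⟩
  exact gammaSet_coset_mem_augIdeal_pow G w

end Main

theorem quillen_generated_by_affine_subspaces_general
    (p : ℕ)
    (V : Type*) [AddCommGroup V] [Module (ZMod 2) V] [Fintype V] :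
    ((augIdeal V ^ p : Ideal (GroupAlg V)) : Set (GroupAlg V)) =
      (Submodule.span (ZMod 2)
        {x : GroupAlg V | ∃ (v : V) (G : Submodule (ZMod 2) V),
          Module.finrank (ZMod 2) G = p ∧ x = gammaSet ((v + ·) '' (G : Set V))} :
        Submodule (ZMod 2) (GroupAlg V)) :=
  congrArg SetLike.coe <| le_antisymm (augIdeal_pow_le_span_gammaAffineSubspaces p)
    (span_gammaAffineSubspaces_le_augIdeal_pow p)

/-- `I_p(V)` equals the `𝔽₂`-linear span of the `γ_U`'s where `U` ranges over
`p`-dimensional affine subspaces of `V` (cosets `U = v + G` with `G` a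
`p`-dimensional linear subspace). -/
theorem quillen_generated_by_affine_subspaces
    (d p : ℕ) (hp : 1 ≤ p)
    (V : Type*) [AddCommGroup V] [Module (ZMod 2) V] [Fintype V]
    (hd : Module.finrank (ZMod 2) V = d) :
    ((augIdeal V ^ p : Ideal (GroupAlg V)) : Set (GroupAlg V)) =
      (Submodule.span (ZMod 2)
        {x : GroupAlg V | ∃ (v : V) (G : Submodule (ZMod 2) V),
          Module.finrank (ZMod 2) G = p ∧ x = gammaSet ((v + ·) '' (G : Set V))} :
        Submodule (ZMod 2) (GroupAlg V)) :=
  quillen_generated_by_affine_subspaces_general p V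
end

section
/- Let V be a finite-dimensional 𝔽₂-vector space and p ≥ 0. There exists an 𝔽₂-linear isomorphism φ : ⋀^p V → I_p(V)/I_{p+1}(V) such that φ(v₁ ∧ … ∧ v_p) = γ_{span{v₁, …, v_p}} + I_{p+1}(V) for every linearly independent tuple v₁, …, v_p of vectors of V. -/
open Finset

/-!
Put `y_v = T_v - 1`; these elements generate `I₁(V)`. The identities
`y_{v+w} = y_v + y_w + y_v y_w` and `y_v² = 0` make `(v₁, …, v_p) ↦ y_{v₁} ⋯ y_{v_p}` alternating
modulo `I_{p+1}(V)`, hence give a linear map `⋀^p V → I_p(V)/I_{p+1}(V)`. It is onto because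
`r a ≡ ε(r) a` modulo `I_{p+1}(V)` for `a ∈ I_p(V)`, and in characteristic 2 the product
`∏ (1 + T_{vᵢ})` over independent `vᵢ` expands to the sum of `T_w` over their span.

For injectivity: over `𝔽₂` the exterior algebra is commutative and `(1 + ι v)² = 1`, so a basis
`(bᵢ)` of `V` yields an algebra map `Θ : 𝔽₂[V] → ⋀V`, `T_v ↦ ∏ (1 + ι bᵢ)^{cᵢ}` for `v = Σ cᵢ bᵢ`,
with `Θ(y_v) ≡ ι v` modulo `J²`, where `J` is the ideal generated by `V`. Hence `Θ` maps
`I_m(V)` into `J^m`, which lives in degrees `≥ m`, and the degree-`p` part of `Θ` is a left inverse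
of the map above.
-/

theorem DirectSum.decompose_eq_zero_of_mem_span_of_lt {A σ : Type*} [Semiring A] [SetLike σ A]
    [AddSubmonoidClass σ A] (𝒜 : ℕ → σ) [GradedRing 𝒜] {k j : ℕ} {x : A}
    (hx : x ∈ Ideal.span (𝒜 k : Set A)) (hj : j < k) : (decompose 𝒜 x j : A) = 0 := by
  suffices ∀ r : A, (decompose 𝒜 (r * x) j : A) = 0 by simpa using this 1
  induction hx using Submodule.span_induction with
  | mem a ha => exact fun r => coe_decompose_mul_of_right_mem_of_not_le 𝒜 ha (by omega)
  | zero => simp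
  | add a c _ _ ha hc =>
    intro r
    rw [mul_add, decompose_add, add_apply, AddMemClass.coe_add, ha, hc, add_zero]
  | smul s a _ ha => intro r; rw [smul_eq_mul, ← mul_assoc]; exact ha _

theorem Ideal.prod_sub_prod_mem_pow_card_succ {R ι : Type*} [CommRing R] {I : Ideal R}
    (s : Finset ι) {a b : ι → R} (ha : ∀ i ∈ s, a i ∈ I) (hab : ∀ i ∈ s, b i - a i ∈ I ^ 2) :
    ∏ i ∈ s, b i - ∏ i ∈ s, a i ∈ I ^ (s.card + 1) := by
  classical
  induction s using Finset.induction_on with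
  | empty => simp
  | insert i s hi ih =>
    have hb : ∀ j ∈ s, b j ∈ I := fun j hj => by
      simpa using add_mem (ha j (mem_insert_of_mem hj))
        (Ideal.pow_le_self two_ne_zero (hab j (mem_insert_of_mem hj)))
    have hB : ∏ j ∈ s, b j ∈ I ^ s.card := by
      simpa using Ideal.prod_mem_prod (I := fun _ => I) hb
    rw [prod_insert hi, prod_insert hi, card_insert_of_notMem hi,
      show b i * ∏ j ∈ s, b j - a i * ∏ j ∈ s, a j
        = (b i - a i) * ∏ j ∈ s, b j + a i * (∏ j ∈ s, b j - ∏ j ∈ s, a j) by ring]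
    refine add_mem ?_ ?_
    · rw [show s.card + 1 + 1 = 2 + s.card by omega, pow_add]
      exact Ideal.mul_mem_mul (hab i (mem_insert_self i s)) hB
    · rw [pow_succ']
      exact Ideal.mul_mem_mul (ha i (mem_insert_self i s))
        (ih (fun j hj => ha j (mem_insert_of_mem hj)) fun j hj => hab j (mem_insert_of_mem hj))

namespace ExteriorAlgebra

variable {R M : Type*} [CommRing R] [CharP R 2] [AddCommGroup M] [Module R M]

theorem add_self_eq_zero_of_charTwo (x : ExteriorAlgebra R M) : x + x = 0 := by
  rw [← two_smul R x, CharTwo.two_eq_zero, zero_smul]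

theorem ι_mul_comm_of_charTwo (v : M) (x : ExteriorAlgebra R M) : ι R v * x = x * ι R v := by
  induction x using ExteriorAlgebra.induction with
  | algebraMap r => exact (Algebra.commutes r _).symm
  | ι w =>
    exact (eq_neg_of_add_eq_zero_left (ι_add_mul_swap v w)).trans
      (neg_eq_of_add_eq_zero_right (add_self_eq_zero_of_charTwo _))
  | mul a c ha hc => rw [← mul_assoc, ha, mul_assoc, hc, mul_assoc]
  | add a c ha hc => rw [mul_add, add_mul, ha, hc]

theorem mul_comm_of_charTwo (x y : ExteriorAlgebra R M) : x * y = y * x := by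
  induction x using ExteriorAlgebra.induction with
  | algebraMap r => exact Algebra.commutes r y
  | ι v => exact ι_mul_comm_of_charTwo v y
  | mul a c ha hc => rw [mul_assoc, hc, ← mul_assoc, ha, mul_assoc]
  | add a c ha hc => rw [add_mul, mul_add, ha, hc]

noncomputable abbrev commRingOfCharTwo : CommRing (ExteriorAlgebra R M) :=
  { (inferInstance : Ring (ExteriorAlgebra R M)) with mul_comm := mul_comm_of_charTwo }

theorem one_add_ι_sq_of_charTwo (v : M) : (1 + ι R v) ^ 2 = 1 := by
  rw [sq, add_mul, mul_add, mul_add, ι_sq_zero, one_mul, one_mul, mul_one, add_zero, add_assoc,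
    add_self_eq_zero_of_charTwo, add_zero]

variable (R M) in
noncomputable abbrev ιIdeal : Ideal (ExteriorAlgebra R M) := Ideal.span (Set.range (ι R))

attribute [local instance] commRingOfCharTwo

theorem decompose_eq_zero_of_mem_pow {k j : ℕ} {x : ExteriorAlgebra R M} (hx : x ∈ ιIdeal R M ^ k)
    (hj : j < k) : (DirectSum.decompose (fun i => ⋀[R]^i M) x j : ExteriorAlgebra R M) = 0 := by
  refine DirectSum.decompose_eq_zero_of_mem_span_of_lt _ ?_ hj
  rw [ιIdeal, Ideal.span, Submodule.span_pow] at hx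
  refine Submodule.span_mono ?_ hx
  rw [← LinearMap.coe_range]
  exact Submodule.pow_subset_pow _

end ExteriorAlgebra

section GroupAlgebra

variable {V : Type*} [AddCommGroup V]

variable (V) in
noncomputable def augmentation : GroupAlg V →ₐ[ZMod 2] ZMod 2 :=
  AddMonoidAlgebra.lift (ZMod 2) (ZMod 2) V 1

lemma augIdeal_eq_ker : augIdeal V = RingHom.ker (augmentation V) := rfl

noncomputable def augGen (v : V) : GroupAlg V := AddMonoidAlgebra.single v 1 - 1

lemma augmentation_single (v : V) (c : ZMod 2) :
    augmentation V (AddMonoidAlgebra.single v c) = c := by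
  simp [augmentation, AddMonoidAlgebra.lift_single]

lemma augGen_mem_augIdeal (v : V) : augGen v ∈ augIdeal V := by
  simp [augIdeal_eq_ker, augGen, augmentation_single]

lemma augGen_zero : augGen (0 : V) = 0 := by
  rw [augGen, ← AddMonoidAlgebra.one_def, sub_self]

lemma augGen_add (v w : V) : augGen (v + w) = augGen v + augGen w + augGen v * augGen w := by
  simp only [augGen, sub_mul, mul_sub, AddMonoidAlgebra.single_mul_single, mul_one, one_mul]
  ring

lemma sub_augmentation_mem_span_augGen (x : GroupAlg V) :
    x - algebraMap (ZMod 2) (GroupAlg V) (augmentation V x) ∈ Ideal.span (Set.range augGen) := by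
  induction x using AddMonoidAlgebra.induction_linear with
  | zero => simp
  | add x y hx hy =>
    rw [map_add, map_add, add_sub_add_comm]
    exact add_mem hx hy
  | single v c =>
    have : AddMonoidAlgebra.single v c - algebraMap (ZMod 2) (GroupAlg V) c = c • augGen v := by
      rw [augGen, smul_sub, AddMonoidAlgebra.smul_single', mul_one, Algebra.algebraMap_eq_smul_one]
    rw [augmentation_single, this]
    exact Submodule.smul_of_tower_mem _ c (Ideal.subset_span ⟨v, rfl⟩)

lemma augIdeal_eq_span_augGen : augIdeal V = Ideal.span (Set.range augGen) := by
  refine le_antisymm (fun x hx => ?_) (Ideal.span_le.2 (Set.range_subset_iff.2 augGen_mem_augIdeal))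
  have hx0 : augmentation V x = 0 := hx
  simpa only [hx0, map_zero, sub_zero] using sub_augmentation_mem_span_augGen x

lemma augIdeal_pow_eq_span (n : ℕ) :
    augIdeal V ^ n = Ideal.span (Set.range fun v : Fin n → V => ∏ i, augGen (v i)) := by
  rw [augIdeal_eq_span_augGen, Ideal.span, Submodule.span_pow]
  congr 1
  ext x
  rw [Set.mem_pow]
  constructor
  · rintro ⟨f, rfl⟩
    choose w hw using fun i => (f i).2
    exact ⟨w, by simp [List.prod_ofFn, hw]⟩
  · rintro ⟨v, rfl⟩
    exact ⟨fun i => ⟨augGen (v i), v i, rfl⟩, by simp [List.prod_ofFn]⟩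

lemma prod_augGen_mem_augIdeal_pow {n : ℕ} (v : Fin n → V) :
    ∏ i, augGen (v i) ∈ augIdeal V ^ n := by
  simpa using Ideal.prod_mem_prod (s := Finset.univ) (I := fun _ => augIdeal V)
    fun i _ => augGen_mem_augIdeal (v i)

variable (V) in
noncomputable abbrev augPow (n : ℕ) : Submodule (ZMod 2) (GroupAlg V) :=
  Submodule.restrictScalars (ZMod 2) (augIdeal V ^ n : Ideal (GroupAlg V))

lemma prod_augGen_update {ι : Type*} [Fintype ι] [DecidableEq ι] (m : ι → V) (i : ι) (z : V) :
    ∏ j, augGen (Function.update m i z j) = augGen z * ∏ j ∈ univ \ {i}, augGen (m j) := by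
  rw [← prod_update_of_mem (mem_univ i)]
  exact prod_congr rfl fun j _ => Function.apply_update (fun _ => augGen) m i z j

lemma prod_augGen_update_add {ι : Type*} [Fintype ι] [DecidableEq ι] (m : ι → V) (i : ι)
    (x y : V) :
    ∏ j, augGen (Function.update m i (x + y) j)
      = ∏ j, augGen (Function.update m i x j) + ∏ j, augGen (Function.update m i y j)
        + augGen x * ∏ j, augGen (Function.update m i y j) := by
  simp only [prod_augGen_update, augGen_add]
  ring

lemma mkQ_augPow_eq_of_sub_mem {n : ℕ} {a b : GroupAlg V} (h : a - b ∈ augIdeal V ^ n) :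
    (augPow V n).mkQ a = (augPow V n).mkQ b :=
  (Submodule.Quotient.eq _).2 h

lemma mkQ_augPow_mul {p : ℕ} (r : GroupAlg V) {a : GroupAlg V} (ha : a ∈ augIdeal V ^ p) :
    (augPow V (p + 1)).mkQ (r * a) = augmentation V r • (augPow V (p + 1)).mkQ a := by
  rw [← map_smul]
  refine mkQ_augPow_eq_of_sub_mem ?_
  have hr : r - algebraMap (ZMod 2) (GroupAlg V) (augmentation V r) ∈ augIdeal V := by
    simp [augIdeal_eq_ker, augmentation_single]
  rw [Algebra.smul_def, ← sub_mul, pow_succ']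
  exact Ideal.mul_mem_mul hr ha

variable [Module (ZMod 2) V]

lemma augGen_mul_self (v : V) : augGen v * augGen v = 0 := by
  have two : (2 : GroupAlg V) = 0 := one_add_one_eq_two (R := GroupAlg V) ▸ ZModModule.add_self 1
  simp only [augGen, sub_mul, mul_sub, AddMonoidAlgebra.single_mul_single, mul_one, one_mul,
    ZModModule.add_self, ← AddMonoidAlgebra.one_def]
  linear_combination (1 - AddMonoidAlgebra.single v 1) * two

lemma augGen_eq_sum_single_smul (v : V) :
    augGen v = ∑ a : ZMod 2, AddMonoidAlgebra.single (a • v) 1 := by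
  rw [show (univ : Finset (ZMod 2)) = {0, 1} from rfl, sum_pair zero_ne_one, zero_smul, one_smul,
    ← AddMonoidAlgebra.one_def, augGen, ZModModule.sub_eq_add, add_comm]

lemma prod_augGen_eq_gammaSet [Fintype V] {n : ℕ} (v : Fin n → V)
    (hv : LinearIndependent (ZMod 2) v) :
    ∏ i, augGen (v i) = gammaSet (Submodule.span (ZMod 2) (Set.range v) : Set V) := by
  classical
  have hspan : (Set.toFinite (Submodule.span (ZMod 2) (Set.range v) : Set V)).toFinset
      = univ.image (Fintype.linearCombination (ZMod 2) v) := by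
    ext w
    simp [← Fintype.range_linearCombination]
  calc ∏ i, augGen (v i)
      = ∏ i, ∑ a : ZMod 2, AddMonoidAlgebra.single (a • v i) (1 : ZMod 2) := by
        simp_rw [augGen_eq_sum_single_smul]
    _ = ∑ c : Fin n → ZMod 2, ∏ i, AddMonoidAlgebra.single (c i • v i) (1 : ZMod 2) :=
        Fintype.prod_sum _
    _ = ∑ c : Fin n → ZMod 2,
          AddMonoidAlgebra.single (Fintype.linearCombination (ZMod 2) v c) (1 : ZMod 2) := by
        simp [AddMonoidAlgebra.prod_single, Fintype.linearCombination_apply]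
    _ = gammaSet (Submodule.span (ZMod 2) (Set.range v) : Set V) := by
        rw [gammaSet, hspan,
          sum_image fun c _ d _ h => hv.fintypeLinearCombination_injective h]

variable (V) in
noncomputable def prodAugGenAlt (p : ℕ) :
    V [⋀^Fin p]→ₗ[ZMod 2] (GroupAlg V ⧸ augPow V (p + 1)) where
  toFun v := (augPow V (p + 1)).mkQ (∏ i, augGen (v i))
  map_update_add' m i x y := by
    rw [prod_augGen_update_add, ← map_add]
    refine mkQ_augPow_eq_of_sub_mem ?_
    rw [add_sub_cancel_left, pow_succ']
    exact Ideal.mul_mem_mul (augGen_mem_augIdeal x) (prod_augGen_mem_augIdeal_pow _)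
  map_update_smul' m i c x := by
    obtain rfl | rfl : c = 0 ∨ c = 1 := by revert c; decide
    · rw [zero_smul, zero_smul, ← map_zero (augPow V (p + 1)).mkQ]
      exact congrArg _ (prod_eq_zero (mem_univ i) (by rw [Function.update_self, augGen_zero]))
    · rw [one_smul, one_smul]
  map_eq_zero_of_eq' v i j hij hne := by
    classical
    rw [← map_zero (augPow V (p + 1)).mkQ, ← mul_prod_erase _ _ (mem_univ i),
      ← mul_prod_erase _ _ (mem_erase.2 ⟨hne.symm, mem_univ j⟩), ← mul_assoc, hij,
      augGen_mul_self, zero_mul]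

variable (V) in
noncomputable def toAugGraded (p : ℕ) : ⋀[ZMod 2]^p V →ₗ[ZMod 2] GroupAlg V ⧸ augPow V (p + 1) :=
  exteriorPower.alternatingMapLinearEquiv (prodAugGenAlt V p)

lemma toAugGraded_ιMulti {p : ℕ} (v : Fin p → V) :
    toAugGraded V p (exteriorPower.ιMulti (ZMod 2) p v)
      = (augPow V (p + 1)).mkQ (∏ i, augGen (v i)) :=
  exteriorPower.alternatingMapLinearEquiv_apply_ιMulti _ _

lemma range_toAugGraded (p : ℕ) :
    LinearMap.range (toAugGraded V p) = (augPow V p).map (augPow V (p + 1)).mkQ := by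
  apply le_antisymm
  · rw [LinearMap.range_eq_map, ← exteriorPower.ιMulti_span, Submodule.map_span, Submodule.span_le]
    rintro _ ⟨_, ⟨v, rfl⟩, rfl⟩
    rw [toAugGraded_ιMulti]
    exact Submodule.mem_map_of_mem (prod_augGen_mem_augIdeal_pow v)
  · rw [Submodule.map_le_iff_le_comap]
    intro a ha
    replace ha : a ∈ augIdeal V ^ p := ha
    rw [augIdeal_pow_eq_span] at ha
    induction ha using Submodule.span_induction with
    | mem _ hx =>
      obtain ⟨v, rfl⟩ := hx
      exact ⟨_, toAugGraded_ιMulti v⟩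
    | zero => exact zero_mem _
    | add _ _ _ _ hx hy => exact add_mem hx hy
    | smul r x hx hx' =>
      rw [Submodule.mem_comap, smul_eq_mul, mkQ_augPow_mul r (by rwa [augIdeal_pow_eq_span])]
      exact Submodule.smul_mem _ _ hx'

section BasisExp

attribute [local instance] ExteriorAlgebra.commRingOfCharTwo

open ExteriorAlgebra

variable {κ : Type*} (b : Module.Basis κ (ZMod 2) V)

noncomputable def basisExp : Multiplicative V →* ExteriorAlgebra (ZMod 2) V where
  toFun v := (b.repr v.toAdd).prod fun i c => (1 + ι (ZMod 2) (b i)) ^ c.val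
  map_one' := by simp
  map_mul' x y := by
    rw [toAdd_mul, map_add]
    refine Finsupp.prod_add_index' (fun _ => by simp) fun i c d => ?_
    rw [ZMod.val_add, ← pow_eq_pow_mod _ (one_add_ι_sq_of_charTwo _), pow_add]

theorem mk_basisExp (v : V) :
    Ideal.Quotient.mk (ιIdeal (ZMod 2) V ^ 2) (basisExp b (.ofAdd v))
      = 1 + Ideal.Quotient.mk (ιIdeal (ZMod 2) V ^ 2) (ι (ZMod 2) v) := by
  have hv : v ∈ Submodule.span (ZMod 2) (Set.range b) := b.span_eq ▸ Submodule.mem_top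
  induction hv using Submodule.span_induction with
  | mem _ h =>
    obtain ⟨i, rfl⟩ := h
    simp [basisExp, Finsupp.prod_single_index, show (1 : ZMod 2).val = 1 from rfl]
  | zero => simp
  | add x y _ _ hx hy =>
    have hxy : Ideal.Quotient.mk (ιIdeal (ZMod 2) V ^ 2) (ι (ZMod 2) x)
        * Ideal.Quotient.mk (ιIdeal (ZMod 2) V ^ 2) (ι (ZMod 2) y) = 0 := by
      rw [← map_mul, Ideal.Quotient.eq_zero_iff_mem, sq]
      exact Ideal.mul_mem_mul (Ideal.subset_span ⟨x, rfl⟩) (Ideal.subset_span ⟨y, rfl⟩)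
    rw [ofAdd_add, map_mul, map_mul, hx, hy, map_add, map_add]
    linear_combination hxy
  | smul c x _ hx =>
    obtain rfl | rfl : c = 0 ∨ c = 1 := by revert c; decide
    · simp
    · simpa using hx

noncomputable def basisAlgHom : GroupAlg V →ₐ[ZMod 2] ExteriorAlgebra (ZMod 2) V :=
  AddMonoidAlgebra.lift (ZMod 2) _ V (basisExp b)

theorem basisAlgHom_augGen_sub_ι_mem (v : V) :
    basisAlgHom b (augGen v) - ι (ZMod 2) v ∈ ιIdeal (ZMod 2) V ^ 2 := by
  rw [← Ideal.Quotient.eq, augGen, map_sub, map_one, basisAlgHom, AddMonoidAlgebra.lift_single,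
    one_smul, map_sub, mk_basisExp, map_one, add_sub_cancel_left]

theorem basisAlgHom_mem_pow {n : ℕ} {x : GroupAlg V} (hx : x ∈ augIdeal V ^ n) :
    basisAlgHom b x ∈ ιIdeal (ZMod 2) V ^ n := by
  have hle : Ideal.map (basisAlgHom b) (augIdeal V) ≤ ιIdeal (ZMod 2) V := by
    rw [augIdeal_eq_span_augGen, Ideal.map_span, Ideal.span_le]
    rintro _ ⟨_, ⟨v, rfl⟩, rfl⟩
    simpa using add_mem (Ideal.pow_le_self two_ne_zero (basisAlgHom_augGen_sub_ι_mem b v))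
      (Ideal.subset_span ⟨v, rfl⟩ : ι (ZMod 2) v ∈ ιIdeal (ZMod 2) V)
  have hx' := Ideal.mem_map_of_mem (basisAlgHom b) hx
  rw [Ideal.map_pow] at hx'
  exact Ideal.pow_right_mono hle n hx'

theorem basisAlgHom_prod_augGen_sub_ιMulti_mem {n : ℕ} (v : Fin n → V) :
    basisAlgHom b (∏ i, augGen (v i)) - ιMulti (ZMod 2) n v ∈ ιIdeal (ZMod 2) V ^ (n + 1) := by
  rw [map_prod, ιMulti_apply, List.prod_ofFn]
  simpa using Ideal.prod_sub_prod_mem_pow_card_succ (I := ιIdeal (ZMod 2) V) univ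
    (fun i _ => Ideal.subset_span ⟨v i, rfl⟩) fun i _ => basisAlgHom_augGen_sub_ι_mem b (v i)

noncomputable def fromAugGraded (p : ℕ) :
    (GroupAlg V ⧸ augPow V (p + 1)) →ₗ[ZMod 2] ExteriorAlgebra (ZMod 2) V :=
  (augPow V (p + 1)).liftQ
    (GradedAlgebra.proj (fun i => ⋀[ZMod 2]^i V) p ∘ₗ (basisAlgHom b).toLinearMap) fun x hx => by
      rw [LinearMap.mem_ker, LinearMap.comp_apply, GradedAlgebra.proj_apply]
      exact decompose_eq_zero_of_mem_pow (basisAlgHom_mem_pow b hx) p.lt_succ_self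

theorem fromAugGraded_toAugGraded {p : ℕ} (x : ⋀[ZMod 2]^p V) :
    fromAugGraded b p (toAugGraded V p x) = x := by
  suffices fromAugGraded b p ∘ₗ toAugGraded V p = (⋀[ZMod 2]^p V).subtype from
    LinearMap.congr_fun this x
  refine exteriorPower.linearMap_ext (AlternatingMap.ext fun v => ?_)
  simp only [LinearMap.compAlternatingMap_apply, LinearMap.comp_apply, toAugGraded_ιMulti,
    fromAugGraded, Submodule.mkQ_apply, Submodule.liftQ_apply, AlgHom.toLinearMap_apply]
  rw [GradedAlgebra.proj_apply, ← sub_add_cancel (basisAlgHom b _) (ιMulti (ZMod 2) p v),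
    DirectSum.decompose_add, DirectSum.add_apply, Submodule.coe_add,
    decompose_eq_zero_of_mem_pow (basisAlgHom_prod_augGen_sub_ιMulti_mem b v) p.lt_succ_self,
    zero_add, DirectSum.decompose_of_mem_same (fun i => ⋀[ZMod 2]^i V)
      (ιMulti_range (ZMod 2) p ⟨v, rfl⟩)]
  rfl

end BasisExp

theorem toAugGraded_injective (p : ℕ) : Function.Injective (toAugGraded V p) := fun x y h =>
  Subtype.ext <| by
    rw [← fromAugGraded_toAugGraded (Module.Basis.ofVectorSpace (ZMod 2) V) x, h,
      fromAugGraded_toAugGraded]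

end GroupAlgebra

/-- `I_p(V)/I_{p+1}(V)` is realised as the image of `I_p(V)` in `𝔽₂[V]/I_{p+1}(V)`. -/
theorem exterior_power_iso_quillen_graded
    (p : ℕ)
    (V : Type*) [AddCommGroup V] [Module (ZMod 2) V] [Fintype V] :
    ∃ φ : (⋀[ZMod 2]^p V) ≃ₗ[ZMod 2]
        ((Submodule.restrictScalars (ZMod 2) (augIdeal V ^ p : Ideal (GroupAlg V))).map
          (Submodule.restrictScalars (ZMod 2)
            (augIdeal V ^ (p + 1) : Ideal (GroupAlg V))).mkQ),
      ∀ (v : Fin p → V), LinearIndependent (ZMod 2) v →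
        ∀ h : ExteriorAlgebra.ιMulti (ZMod 2) p v ∈ ⋀[ZMod 2]^p V,
          (φ ⟨ExteriorAlgebra.ιMulti (ZMod 2) p v, h⟩ :
              GroupAlg V ⧸ Submodule.restrictScalars (ZMod 2)
                (augIdeal V ^ (p + 1) : Ideal (GroupAlg V))) =
            (Submodule.restrictScalars (ZMod 2)
                (augIdeal V ^ (p + 1) : Ideal (GroupAlg V))).mkQ
              (gammaSet (Submodule.span (ZMod 2) (Set.range v) : Set V)) := by
  refine ⟨(LinearEquiv.ofInjective _ (toAugGraded_injective p)).trans
    (LinearEquiv.ofEq _ _ (range_toAugGraded p)), fun v hv _ => ?_⟩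
  exact (toAugGraded_ιMulti v).trans (congrArg _ (prod_augGen_eq_gammaSet v hv))
end

section
/- Let V = (ℤ/2ℤ)² and let I be the augmentation ideal of the integral group algebra ℤ[V]. Then the powers of I form a strictly decreasing chain: I^{p+1} ⊊ I^p for every p ≥ 0. In particular, the Quillen filtration of the integral group algebra of (ℤ/2ℤ)² never stabilises. -/
/-!
A homomorphism `χ : A → {±1} ⊆ ℤ` extends to a ring homomorphism `ℤ[A] → ℤ` that agrees with the
augmentation modulo `2`, so it maps `I` into `2ℤ` and `I^p` into `2^p ℤ`. If `χ a = -1`, then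
`(T_a - 1)^p ∈ I^p` is sent to `(-2)^p`, which is not divisible by `2^(p+1)`; hence
`(T_a - 1)^p ∉ I^(p+1)`. For `(ℤ/2ℤ)²` take `χ (x, y) = (-1)^x`.
-/

/-- The augmentation ideal of the integral group algebra `ℤ[A]`: the kernel of the
ring homomorphism `ℤ[A] → ℤ` sending every basis element `T_a` to `1`. -/
noncomputable def intAugIdeal (A : Type*) [AddCommGroup A] :
    Ideal (AddMonoidAlgebra ℤ A) :=
  RingHom.ker (AddMonoidAlgebra.lift ℤ ℤ A 1)

open AddMonoidAlgebra

section

variable {A : Type*} [AddCommGroup A]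

lemma single_sub_one_mem_intAugIdeal (a : A) : single a 1 - 1 ∈ intAugIdeal A := by
  simp [intAugIdeal, RingHom.mem_ker, lift_single]

lemma intCast_zmod_two_comp_lift (χ : Multiplicative A →* ℤ) :
    (Int.castRingHom (ZMod 2)).toIntAlgHom.comp (lift ℤ ℤ A χ) =
      (Int.castRingHom (ZMod 2)).toIntAlgHom.comp (lift ℤ ℤ A 1) := by
  refine algHom_ext (fun a ↦ ?_) (Subsingleton.elim _ _)
  have hunit : IsUnit (χ (Multiplicative.ofAdd a)) := (Group.isUnit _).map χ
  rcases Int.isUnit_iff.mp hunit with h | h <;> simp [lift_single, h]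

lemma two_dvd_lift_of_mem_intAugIdeal (χ : Multiplicative A →* ℤ) {x : AddMonoidAlgebra ℤ A}
    (hx : x ∈ intAugIdeal A) : 2 ∣ lift ℤ ℤ A χ x := by
  have hcast := congr($(intCast_zmod_two_comp_lift χ) x)
  simp only [AlgHom.comp_apply, RingHom.toIntAlgHom_apply, Int.coe_castRingHom] at hcast
  rw [(RingHom.mem_ker).mp hx, Int.cast_zero] at hcast
  exact_mod_cast (ZMod.intCast_zmod_eq_zero_iff_dvd _ 2).mp hcast

lemma two_pow_dvd_lift_of_mem_intAugIdeal_pow (χ : Multiplicative A →* ℤ) {p : ℕ}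
    {x : AddMonoidAlgebra ℤ A} (hx : x ∈ intAugIdeal A ^ p) : 2 ^ p ∣ lift ℤ ℤ A χ x := by
  have hI : (intAugIdeal A).map (lift ℤ ℤ A χ) ≤ Ideal.span {2} :=
    Ideal.map_le_iff_le_comap.mpr fun y hy ↦
      Ideal.mem_span_singleton.mpr (two_dvd_lift_of_mem_intAugIdeal χ hy)
  have hmem := Ideal.pow_right_mono hI p (Ideal.map_pow (lift ℤ ℤ A χ) _ p ▸
    Ideal.mem_map_of_mem (lift ℤ ℤ A χ) hx)
  rwa [Ideal.span_singleton_pow, Ideal.mem_span_singleton] at hmem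

lemma not_two_pow_succ_dvd_neg_two_pow (p : ℕ) : ¬ (2 : ℤ) ^ (p + 1) ∣ (-2) ^ p := by
  rw [← Int.natAbs_dvd_natAbs, Int.natAbs_pow, Int.natAbs_pow]
  simp only [Int.reduceAbs, Int.reduceNeg]
  rw [Nat.pow_dvd_pow_iff_le_right one_lt_two]
  omega

theorem intAugIdeal_pow_succ_lt_pow_of_map_eq_neg_one (χ : Multiplicative A →* ℤ) {a : A}
    (ha : χ (Multiplicative.ofAdd a) = -1) (p : ℕ) :
    intAugIdeal A ^ (p + 1) < intAugIdeal A ^ p := by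
  refine lt_of_le_of_ne (Ideal.pow_le_pow_right p.le_succ) fun heq ↦ ?_
  have hmem : (single a 1 - 1) ^ p ∈ intAugIdeal A ^ (p + 1) :=
    heq ▸ Ideal.pow_mem_pow (single_sub_one_mem_intAugIdeal a) p
  have hdvd := two_pow_dvd_lift_of_mem_intAugIdeal_pow χ hmem
  rw [map_pow, map_sub, map_one, lift_single, ha] at hdvd
  exact not_two_pow_succ_dvd_neg_two_pow p (by simpa using hdvd)

end

def fstSign : Multiplicative (ZMod 2 × ZMod 2) →* ℤ where
  toFun v := (-1) ^ (Multiplicative.toAdd v).1.val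
  map_one' := by decide
  map_mul' := by decide

/-- For `V = (ℤ/2ℤ)²`, the powers of the augmentation ideal `I` of `ℤ[V]` form a
strictly decreasing chain `I^{p+1} ⊊ I^p` for every `p ≥ 0`; in particular the
Quillen filtration of the integral group algebra never stabilises. -/
theorem int_quillen_filtration_never_stabilises (p : ℕ) :
    intAugIdeal (ZMod 2 × ZMod 2) ^ (p + 1) < intAugIdeal (ZMod 2 × ZMod 2) ^ p :=
  intAugIdeal_pow_succ_lt_pow_of_map_eq_neg_one fstSign (a := (1, 0)) (by decide) p
end

section
/- Let E be a finite set, let p ≥ 1, and let d₁, …, d_p ∈ (ℤ/2ℤ)^E have pairwise disjoint supports. Let v ∈ (ℤ/2ℤ)^E and let e₁, …, e_q ∈ E be any elements (not necessarily distinct) with 0 ≤ q ≤ p − 1. Then Σ_{S ⊆ {1,…,p}} (−1)^{|S|} · Π_{i=1}^{q} h_{e_i}(v + Σ_{j ∈ S} d_j) = 0 in ℤ. (That is, a signed chain over a p-dimensional affine coordinate subspace is annihilated by every product of fewer than p Heaviside functions, so it lies in the p-th piece of the dual Varchenko–Gelfand degree filtration.) -/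
/-!
Each `e_i` lies in the support of at most one `d_j`, so as `q < p` some `d_k` vanishes at
every `e_i`. The summand then does not see whether `k ∈ S`, and the terms for `S` and `S ∪ {k}`
cancel.
-/

open Finset

/-- The Heaviside value: `h_e(u) = 1` if `u(e) = 0` and `h_e(u) = 0` if `u(e) = 1`. -/
def heaviside {E : Type*} (e : E) (u : E → ZMod 2) : ℤ :=
  if u e = 0 then 1 else 0

open Function

theorem sum_neg_one_pow_card_mul_eq_zero_of_insert_invariant {ι R : Type*} [Fintype ι]
    [DecidableEq ι] [Ring R] (F : Finset ι → R) (k : ι)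
    (hF : ∀ S, k ∉ S → F (insert k S) = F S) :
    ∑ S : Finset ι, (-1 : R) ^ S.card * F S = 0 := by
  rw [← powerset_univ, ← insert_erase (mem_univ k), sum_powerset_insert (notMem_erase k _),
    ← sum_add_distrib]
  refine sum_eq_zero fun S hS => ?_
  have hkS : k ∉ S := fun hk => notMem_erase k _ (mem_powerset.mp hS hk)
  rw [card_insert_of_notMem hkS, hF S hkS, pow_succ]
  noncomm_ring

theorem exists_forall_mem_eq_zero_of_card_lt {ι E M : Type*} [Fintype ι] [Zero M]
    (f : ι → E → M) (hf : Pairwise fun i j => Disjoint (support (f i)) (support (f j)))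
    (s : Finset E) (hs : s.card < Fintype.card ι) : ∃ k, ∀ x ∈ s, f k x = 0 := by
  by_contra! h
  choose g hgs hg using h
  have hinj : Set.InjOn g (univ : Finset ι) := fun i _ j _ hij =>
    hf.eq <| Set.not_disjoint_iff.mpr ⟨g i, hg i, hij ▸ hg j⟩
  exact hs.not_ge (card_le_card_of_injOn g (fun k _ => hgs k) hinj)

theorem heaviside_add_of_apply_eq_zero {E : Type*} {e : E} {w : E → ZMod 2} (hw : w e = 0)
    (u : E → ZMod 2) : heaviside e (w + u) = heaviside e u := by
  simp [heaviside, hw]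

theorem signed_coordinate_chain_annihilated_general
    (E : Type*) (p : ℕ)
    (d : Fin p → (E → ZMod 2))
    (hdisj : ∀ i j : Fin p, i ≠ j → ∀ e : E, d i e = 1 → d j e ≠ 1)
    (v : E → ZMod 2) (q : ℕ) (hq : q < p) (e : Fin q → E) :
    ∑ S : Finset (Fin p), (-1 : ℤ) ^ S.card *
        ∏ i : Fin q, heaviside (e i) (v + ∑ j ∈ S, d j) = 0 := by
  classical
  have ne_zero_iff : ∀ a : ZMod 2, a ≠ 0 ↔ a = 1 := by decide
  have hsupp : Pairwise fun i j => Disjoint (support (d i)) (support (d j)) := fun i j hij =>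
    Set.disjoint_left.mpr fun x hi hj =>
      hdisj i j hij x ((ne_zero_iff _).mp hi) ((ne_zero_iff _).mp hj)
  obtain ⟨k, hk⟩ := exists_forall_mem_eq_zero_of_card_lt d hsupp (univ.image e)
    (card_image_le.trans_lt (by simpa using hq))
  refine sum_neg_one_pow_card_mul_eq_zero_of_insert_invariant _ k fun S hkS =>
    prod_congr rfl fun i _ => ?_
  rw [sum_insert hkS, add_left_comm]
  exact heaviside_add_of_apply_eq_zero (hk _ (mem_image_of_mem e (mem_univ i))) _

/-- A signed chain over a `p`-dimensional affine coordinate subspace is annihilated by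
any product of fewer than `p` Heaviside functions: if `d₁, …, d_p ∈ (ℤ/2ℤ)^E` have
pairwise disjoint supports, `v ∈ (ℤ/2ℤ)^E`, and `e₁, …, e_q ∈ E` with `q ≤ p − 1`, then
`Σ_{S ⊆ {1,…,p}} (−1)^{|S|} Π_{i=1}^{q} h_{e_i}(v + Σ_{j ∈ S} d_j) = 0`. -/
theorem signed_coordinate_chain_annihilated
    (E : Type*) [Fintype E] (p : ℕ) (hp : 1 ≤ p)
    (d : Fin p → (E → ZMod 2))
    (hdisj : ∀ i j : Fin p, i ≠ j → ∀ e : E, d i e = 1 → d j e ≠ 1)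
    (v : E → ZMod 2) (q : ℕ) (hq : q < p) (e : Fin q → E) :
    ∑ S : Finset (Fin p), (-1 : ℤ) ^ S.card *
        ∏ i : Fin q, heaviside (e i) (v + ∑ j ∈ S, d j) = 0 :=
  signed_coordinate_chain_annihilated_general E p d hdisj v q hq e
end

section
/- Let E be a finite set, let p ≥ 1, and let d₁, …, d_p ∈ (ℤ/2ℤ)^E have pairwise disjoint supports. Let v ∈ (ℤ/2ℤ)^E and suppose i₁, …, i_p ∈ E satisfy d_j(i_j) = 1 for each j. Then Σ_{S ⊆ {1,…,p}} (−1)^{|S|} · Π_{j=1}^{p} h_{i_j}(v + Σ_{k ∈ S} d_k) = Π_{j=1}^{p} (−1)^{v(i_j)} in ℤ. -/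
open Finset

/- By disjointness, coordinate `i_j` of `v + Σ_{k ∈ S} d_k` is `v(i_j) + [j ∈ S]`, so the
`j`-th factor only sees whether `j ∈ S`. The alternating sum over `S` then factors as
`Π_j (h_{i_j}(v) - h_{i_j}(v + 1))`, and `h_e(u) - h_e(u + 1) = (-1)^{u(e)}`. -/

theorem Fintype.prod_sub_eq_sum_mul_prod_ite {ι R : Type*} [Fintype ι] [DecidableEq ι]
    [CommRing R] (f g : ι → R) :
    ∏ j, (f j - g j) = ∑ S : Finset ι, (-1) ^ #S * ∏ j, if j ∈ S then g j else f j := by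
  rw [Finset.prod_sub, powerset_univ]
  refine Finset.sum_congr rfl fun S _ => ?_
  rw [prod_ite, filter_mem_eq_inter, univ_inter, ← sdiff_eq_filter, mul_assoc,
    mul_comm (∏ j ∈ S, g j)]

theorem heaviside_congr {E : Type*} {e : E} {u u' : E → ZMod 2} (h : u e = u' e) :
    heaviside e u = heaviside e u' := by
  simp only [heaviside, h]

theorem heaviside_sub_heaviside_add_one {E : Type*} (e : E) (u : E → ZMod 2) :
    heaviside e u - heaviside e (u + 1) = (-1) ^ (u e).val := by
  simp only [heaviside, Pi.add_apply, Pi.one_apply]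
  exact (by decide : ∀ x : ZMod 2,
    (if x = 0 then 1 else 0) - (if x + 1 = 0 then 1 else 0) = (-1 : ℤ) ^ x.val) (u e)

section DisjointSupports

variable {ι E : Type*} [DecidableEq ι] {d : ι → E → ZMod 2} {i : ι → E}

theorem sum_apply_eq_ite_of_disjoint (hdisj : ∀ j k, j ≠ k → ∀ e, d j e = 1 → d k e ≠ 1)
    (hi : ∀ j, d j (i j) = 1) (S : Finset ι) (j : ι) :
    (∑ k ∈ S, d k) (i j) = if j ∈ S then 1 else 0 := by
  have off_diag : ∀ k, k ≠ j → d k (i j) = 0 := fun k hkj =>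
    (by decide : ∀ x : ZMod 2, x ≠ 1 → x = 0) _ (hdisj j k (Ne.symm hkj) _ (hi j))
  rw [Finset.sum_apply]
  split_ifs with hj
  · rw [sum_eq_single_of_mem j hj fun k _ => off_diag k, hi j]
  · exact sum_eq_zero fun k hk => off_diag k (ne_of_mem_of_not_mem hk hj)

theorem heaviside_add_sum_eq_ite (hdisj : ∀ j k, j ≠ k → ∀ e, d j e = 1 → d k e ≠ 1)
    (hi : ∀ j, d j (i j) = 1) (v : E → ZMod 2) (S : Finset ι) (j : ι) :
    heaviside (i j) (v + ∑ k ∈ S, d k) =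
      if j ∈ S then heaviside (i j) (v + 1) else heaviside (i j) v := by
  split_ifs with hj <;>
    exact heaviside_congr (by simp [sum_apply_eq_ite_of_disjoint hdisj hi, hj])

end DisjointSupports

theorem signed_coordinate_chain_evaluation_general
    (E : Type*) (p : ℕ)
    (d : Fin p → (E → ZMod 2))
    (hdisj : ∀ j k : Fin p, j ≠ k → ∀ e : E, d j e = 1 → d k e ≠ 1)
    (v : E → ZMod 2) (i : Fin p → E) (hi : ∀ j : Fin p, d j (i j) = 1) :
    ∑ S : Finset (Fin p), (-1 : ℤ) ^ S.card *
        ∏ j : Fin p, heaviside (i j) (v + ∑ k ∈ S, d k) =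
      ∏ j : Fin p, (-1 : ℤ) ^ (v (i j)).val := by
  calc ∑ S : Finset (Fin p), (-1 : ℤ) ^ S.card *
          ∏ j : Fin p, heaviside (i j) (v + ∑ k ∈ S, d k)
      = ∑ S : Finset (Fin p), (-1 : ℤ) ^ S.card *
          ∏ j, if j ∈ S then heaviside (i j) (v + 1) else heaviside (i j) v := by
        simp only [heaviside_add_sum_eq_ite hdisj hi]
    _ = ∏ j, (heaviside (i j) v - heaviside (i j) (v + 1)) :=
        (Fintype.prod_sub_eq_sum_mul_prod_ite _ _).symm
    _ = ∏ j : Fin p, (-1 : ℤ) ^ (v (i j)).val := by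
        simp only [heaviside_sub_heaviside_add_one]

/-- If `d₁, …, d_p ∈ (ℤ/2ℤ)^E` have pairwise disjoint supports, `v ∈ (ℤ/2ℤ)^E`, and
`i₁, …, i_p ∈ E` satisfy `d_j(i_j) = 1` for each `j`, then
`Σ_{S ⊆ {1,…,p}} (−1)^{|S|} Π_{j=1}^{p} h_{i_j}(v + Σ_{k ∈ S} d_k) = Π_{j=1}^{p} (−1)^{v(i_j)}`. -/
theorem signed_coordinate_chain_evaluation
    (E : Type*) [Fintype E] (p : ℕ) (hp : 1 ≤ p)
    (d : Fin p → (E → ZMod 2))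
    (hdisj : ∀ j k : Fin p, j ≠ k → ∀ e : E, d j e = 1 → d k e ≠ 1)
    (v : E → ZMod 2) (i : Fin p → E) (hi : ∀ j : Fin p, d j (i j) = 1) :
    ∑ S : Finset (Fin p), (-1 : ℤ) ^ S.card *
        ∏ j : Fin p, heaviside (i j) (v + ∑ k ∈ S, d k) =
      ∏ j : Fin p, (-1 : ℤ) ^ (v (i j)).val :=
  signed_coordinate_chain_evaluation_general E p d hdisj v i hi
end

section
/- Let M be a loopless matroid on a linearly ordered finite ground set E. Let S = {i₁, …, i_p} be an NBC-set of M with i₁ > i₂ > … > i_p, and set F_k = cl({i₁, …, i_k}) for 0 ≤ k ≤ p (so F₀ = cl(∅) = ∅ since M is loopless). Then for every NBC-set S' of M with |S'| = p and S' ≠ S, there exists k with 1 ≤ k ≤ p such that S' ∩ (F_k ∖ F_{k−1}) = ∅. -/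
open Finset Set

/-- A circuit of a matroid: a minimal dependent set, i.e. a dependent set all of whose
one-element deletions are independent. -/
def MatroidCircuit {α : Type*} (M : Matroid α) (C : Set α) : Prop :=
  M.Dep C ∧ ∀ x ∈ C, M.Indep (C \ {x})

/-- A broken circuit: a circuit with its minimum element removed
(with respect to a linear order on the ground type). -/
def BrokenCircuit {α : Type*} [LinearOrder α] (M : Matroid α) (B : Set α) : Prop :=
  ∃ (C : Set α) (m : α), MatroidCircuit M C ∧ m ∈ C ∧ (∀ x ∈ C, m ≤ x) ∧ B = C \ {m}

/-- An NBC-set: a subset of the ground set containing no broken circuit. -/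
def IsNBC {α : Type*} [LinearOrder α] (M : Matroid α) (S : Set α) : Prop :=
  S ⊆ M.E ∧ ∀ B : Set α, BrokenCircuit M B → ¬B ⊆ S

/-
Suppose `S'` meets every `F_k ∖ F_{k-1}`, say in `x_k`. By induction `x_k = i_k`: otherwise
`x_k ∈ cl{i₁, …, i_k} ∖ cl{i₁, …, i_{k-1}}` yields a circuit `C ⊆ {x_k, i₁, …, i_k}` through
both `x_k` and `i_k`, and `i_k` is the least of the `i_j` in `C`. If `x_k < i_k` then
`C ∖ {x_k} ⊆ S` is a broken circuit; if `x_k > i_k` then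
`C ∖ {i_k} ⊆ {x_k, i₁, …, i_{k-1}} ⊆ S'` is one. Hence `S ⊆ S'`, and equal cardinalities
force `S' = S`.
-/

theorem matroidCircuit_iff {α : Type*} {M : Matroid α} {C : Set α} :
    MatroidCircuit M C ↔ M.IsCircuit C :=
  Matroid.isCircuit_iff_dep_forall_sdiff_singleton_indep.symm

theorem Matroid.Indep.exists_isCircuit_of_mem_closure_insert {α : Type*} {M : Matroid α}
    {I : Set α} {x y : α} (hI : M.Indep (insert y I))
    (hx : x ∈ M.closure (insert y I) \ M.closure I) (hxy : x ≠ y) :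
    ∃ C ⊆ insert x (insert y I), M.IsCircuit C ∧ x ∈ C ∧ y ∈ C := by
  have hxI : x ∉ insert y I := by
    rintro (rfl | hxI')
    · exact hxy rfl
    · exact hx.2 (M.subset_closure I (hI.subset (subset_insert y I)).subset_ground hxI')
  have hC := hI.fundCircuit_isCircuit hx.1 hxI
  refine ⟨_, M.fundCircuit_subset_insert x _, hC, M.mem_fundCircuit x _, ?_⟩
  by_contra hyC
  have hsub : M.fundCircuit x (insert y I) \ {x} ⊆ I := by
    intro z ⟨hzC, hzx⟩
    rcases M.fundCircuit_subset_insert x _ hzC with rfl | rfl | hzI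
    · exact absurd rfl hzx
    · exact absurd hzC hyC
    · exact hzI
  exact hx.2 (M.closure_subset_closure hsub
    (hC.mem_closure_sdiff_singleton_of_mem (M.mem_fundCircuit x _)))

namespace IsNBC

variable {α : Type*} [LinearOrder α] {M : Matroid α} {S : Set α}

theorem not_sdiff_subset (hS : IsNBC M S) {C : Set α} {a : α} (hC : M.IsCircuit C)
    (ha : a ∈ C) (hmin : ∀ x ∈ C, a ≤ x) : ¬C \ {a} ⊆ S :=
  hS.2 _ ⟨C, a, matroidCircuit_iff.2 hC, ha, hmin, rfl⟩

theorem indep (hS : IsNBC M S) (hfin : S.Finite) : M.Indep S := by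
  by_contra hdep
  obtain ⟨C, hCS, hC⟩ := (M.not_indep_iff hS.1).1 hdep |>.exists_isCircuit_subset
  obtain ⟨a, haC, hmin⟩ := C.exists_min_image id (hfin.subset hCS) hC.nonempty
  exact hS.not_sdiff_subset hC haC hmin (sdiff_subset.trans hCS)

theorem eq_of_mem_closure_Iic_sdiff {p : ℕ} {i : Fin p → α} (hi : StrictAnti i)
    (hS : IsNBC M (range i)) {S' : Set α} (hS' : IsNBC M S') {m : Fin p}
    (hprefix : i '' Set.Iio m ⊆ S') {x : α} (hxS' : x ∈ S')
    (hx : x ∈ M.closure (i '' Set.Iic m) \ M.closure (i '' Set.Iio m)) : x = i m := by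
  by_contra hxm
  have hIic : i '' Set.Iic m = insert (i m) (i '' Set.Iio m) := by
    rw [← Set.Iio_insert, image_insert_eq]
  have hind : M.Indep (i '' Set.Iic m) :=
    (hS.indep (finite_range i)).subset (image_subset_range _ _)
  rw [hIic] at hx hind
  obtain ⟨C, hCsub, hC, hxC, hmC⟩ := hind.exists_isCircuit_of_mem_closure_insert hx hxm
  have hlt : ∀ z ∈ i '' Set.Iio m, i m < z := by
    rintro _ ⟨j, hj, rfl⟩
    exact hi hj
  rcases lt_or_gt_of_ne hxm with hxlt | hxgt
  · refine hS.not_sdiff_subset hC hxC ?_ ?_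
    · intro z hz
      rcases hCsub hz with rfl | rfl | hz
      exacts [le_rfl, hxlt.le, (hxlt.trans (hlt z hz)).le]
    · rintro z ⟨hzC, hzx⟩
      rcases hCsub hzC with rfl | rfl | hz
      exacts [absurd rfl hzx, mem_range_self m, image_subset_range _ _ hz]
  · refine hS'.not_sdiff_subset hC hmC ?_ ?_
    · intro z hz
      rcases hCsub hz with rfl | rfl | hz
      exacts [hxgt.le, le_rfl, (hlt z hz).le]
    · rintro z ⟨hzC, hzm⟩
      rcases hCsub hzC with rfl | rfl | hz
      exacts [hxS', absurd rfl hzm, hprefix hz]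

end IsNBC

theorem nbc_misses_some_step_general
    {α : Type*} [LinearOrder α] (M : Matroid α)
    (p : ℕ) (i : Fin p → α) (hi : StrictAnti i)
    (hS : IsNBC M (Set.range i))
    (F : ℕ → Set α) (hF : ∀ k : ℕ, F k = M.closure (i '' {j : Fin p | (j : ℕ) < k}))
    (S' : Finset α) (hS' : IsNBC M ↑S') (hcard : S'.card = p)
    (hne : (↑S' : Set α) ≠ Set.range i) :
    ∃ k : ℕ, 1 ≤ k ∧ k ≤ p ∧ (↑S' : Set α) ∩ (F k \ F (k - 1)) = ∅ := by
  by_contra! hmeets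
  have hstep (m : Fin p) :
      ((S' : Set α) ∩ (M.closure (i '' Set.Iic m) \ M.closure (i '' Set.Iio m))).Nonempty := by
    have hIic : {j : Fin p | (j : ℕ) < (m : ℕ) + 1} = Set.Iic m :=
      Set.ext fun j => by simp only [Set.mem_ofPred_eq, Set.mem_Iic, Fin.le_def]; omega
    have hIio : {j : Fin p | (j : ℕ) < m} = Set.Iio m := rfl
    have := hmeets ((m : ℕ) + 1) (by omega) m.isLt
    rwa [hF, hF, Nat.add_sub_cancel, hIic, hIio] at this
  have hrange : range i ⊆ S' := by
    rintro _ ⟨m, rfl⟩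
    induction m using WellFoundedLT.induction with
    | _ m ih =>
      obtain ⟨x, hxS', hx⟩ := hstep m
      have hprefix : i '' Set.Iio m ⊆ S' := by
        rintro _ ⟨j, hj, rfl⟩
        exact ih j hj
      rwa [← hS.eq_of_mem_closure_Iic_sdiff hi hS' hprefix hxS' hx]
  refine hne (eq_of_subset_of_ncard_le hrange ?_ S'.finite_toSet).symm
  rw [ncard_coe_finset, ncard_range_of_injective hi.injective, Nat.card_eq_fintype_card,
    Fintype.card_fin, hcard]

/-- Let `S = {i₁ > … > i_p}` be an NBC-set of a loopless matroid `M` and let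
`F_k = cl{i₁, …, i_k}`. Then every other NBC-set `S'` of size `p` misses
`F_k ∖ F_{k−1}` for some `1 ≤ k ≤ p`. -/
theorem nbc_misses_some_step
    {α : Type*} [Fintype α] [LinearOrder α] (M : Matroid α)
    (hloopless : M.closure ∅ = ∅)
    (p : ℕ) (i : Fin p → α) (hi : StrictAnti i)
    (hS : IsNBC M (Set.range i))
    (F : ℕ → Set α) (hF : ∀ k : ℕ, F k = M.closure (i '' {j : Fin p | (j : ℕ) < k}))
    (S' : Finset α) (hS' : IsNBC M ↑S') (hcard : S'.card = p)
    (hne : (↑S' : Set α) ≠ Set.range i) :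
    ∃ k : ℕ, 1 ≤ k ∧ k ≤ p ∧ (↑S' : Set α) ∩ (F k \ F (k - 1)) = ∅ :=
  nbc_misses_some_step_general M p i hi hS F hF S' hS' hcard hne
end

section
/- Let M be a loopless matroid on a linearly ordered finite ground set E. Let S = {i₁ > … > i_p} be an NBC-set of M and set F_k = cl({i₁, …, i_k}) for 0 ≤ k ≤ p. For an NBC-set S' = {i'₁, …, i'_p} of M of size p, let A be the p × p integer matrix with A(j,k) = 1 if i'_j ∈ F_k ∖ F_{k−1} and A(j,k) = 0 otherwise. Then: (a) if S' = S and the elements are listed in decreasing order (i'_j = i_j for all j), then A is the identity matrix, so det A = 1; (b) if S' ≠ S, then det A = 0. -/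
open Finset Set
open scoped Classical

/-!
Proof idea. Since `F₀ ⊆ F₁ ⊆ ⋯` is increasing, the sets `F_k ∖ F_{k-1}` are disjoint, so every
row of `A` has at most one nonzero entry. For `S' = S` the entry of row `j` sits at column `j`
because `S` is independent. If `det A ≠ 0`, the nonzero entries lie at the positions of a
permutation `φ`, and by induction on `φ j` one finds `i'_j = i_{φ j}`: otherwise `i'_j`, `i_{φ j}`
and the `i_m` with `m < φ j` contain a circuit through `i'_j` and `i_{φ j}`. Removing the minimum
of that circuit leaves a broken circuit inside `S` (if the minimum is `i'_j`) or inside `S'` (if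
it is `i_{φ j}`, using that the `i_m` with `m < φ j` lie in `S'` by induction). Hence `S' = S`.
-/

section NBC

variable {α : Type*} [LinearOrder α] {M : Matroid α}

lemma IsNBC.not_sdiff_singleton_subset {S C : Set α} {m : α} (hS : IsNBC M S)
    (hC : M.IsCircuit C) (hmC : m ∈ C) (hmin : ∀ x ∈ C, m ≤ x) : ¬C \ {m} ⊆ S :=
  hS.2 _ ⟨C, m, Matroid.isCircuit_iff_dep_forall_sdiff_singleton_indep.mp hC, hmC, hmin, rfl⟩

lemma IsNBC.indep_s9 {S : Set α} (hS : IsNBC M S) (hSfin : S.Finite) : M.Indep S := by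
  by_contra hdep
  obtain ⟨C, hCS, hC⟩ := (M.dep_iff.mpr ⟨hdep, hS.1⟩).exists_isCircuit_subset
  obtain ⟨m, hmC, hmin⟩ := C.exists_min_image id (hSfin.subset hCS) hC.nonempty
  exact hS.not_sdiff_singleton_subset hC hmC hmin (sdiff_subset.trans hCS)

lemma IsNBC.eq_of_mem_closure_insert {S S' X : Set α} {a y : α} (hS : IsNBC M S)
    (hS' : IsNBC M S') (hSfin : S.Finite) (haS : a ∈ S) (hXS : X ⊆ S) (haX : ∀ x ∈ X, a < x)
    (hyS' : y ∈ S') (hXS' : X ⊆ S') (hy : y ∈ M.closure (insert a X))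
    (hyX : y ∉ M.closure X) : y = a := by
  by_contra hya
  have haXS : insert a X ⊆ S := insert_subset haS hXS
  have hI : M.Indep (insert a X) := (hS.indep_s9 hSfin).subset haXS
  have hyI : y ∉ insert a X := by
    rintro (rfl | hyX')
    · exact hya rfl
    · exact hyX (M.subset_closure X (hI.subset (subset_insert a X)).subset_ground hyX')
  set C := M.fundCircuit y (insert a X)
  have hC : M.IsCircuit C := hI.fundCircuit_isCircuit hy hyI
  have hCsub : C ⊆ insert y (insert a X) := M.fundCircuit_subset_insert y _
  have hyC : y ∈ C := M.mem_fundCircuit y _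
  have haC : a ∈ C := by
    by_contra haC
    refine hyX (M.closure_subset_closure ?_ (hC.mem_closure_sdiff_singleton_of_mem hyC))
    rintro x ⟨hxC, hxy⟩
    rcases hCsub hxC with rfl | rfl | hxX
    exacts [(hxy rfl).elim, (haC hxC).elim, hxX]
  have hCfin : C.Finite := ((hSfin.subset haXS).insert y).subset hCsub
  obtain ⟨m, hmC, hmin⟩ := C.exists_min_image id hCfin ⟨y, hyC⟩
  rcases hCsub hmC with rfl | rfl | hmX
  · refine hS.not_sdiff_singleton_subset hC hmC hmin fun x hx => ?_
    exact haXS ((hCsub hx.1).resolve_left hx.2)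
  · refine hS'.not_sdiff_singleton_subset hC hmC hmin fun x hx => ?_
    rcases hCsub hx.1 with rfl | rfl | hxX
    exacts [hyS', (hx.2 rfl).elim, hXS' hxX]
  · exact (haX m hmX).not_ge (hmin a haC)

end NBC

lemma Monotone.eq_of_mem_add_one_sdiff {α : Type*} {F : ℕ → Set α} (hF : Monotone F)
    {x : α} {k l : ℕ} (hk : x ∈ F (k + 1) \ F k) (hl : x ∈ F (l + 1) \ F l) : k = l := by
  rw [← hF.disjointed_add_one] at hk hl
  by_contra hkl
  exact Set.disjoint_left.mp (disjoint_disjointed F (by omega : k + 1 ≠ l + 1)) hk hl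

lemma Matrix.exists_bijective_of_det_ne_zero {n R : Type*} [Fintype n] [DecidableEq n]
    [CommRing R] {A : Matrix n n R} {P : n → n → Prop} [DecidableRel P]
    (hA : ∀ j k, A j k = if P j k then 1 else 0) (hP : ∀ j k l, P j k → P j l → k = l)
    (hdet : A.det ≠ 0) : ∃ φ : n → n, Function.Bijective φ ∧ ∀ j, P j (φ j) := by
  have hrow : ∀ j, ∃ k, P j k := by
    by_contra! h
    obtain ⟨j, hj⟩ := h
    exact hdet (Matrix.det_eq_zero_of_row_eq_zero j fun k => by rw [hA, if_neg (hj k)])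
  choose φ hφ using hrow
  have hP_iff : ∀ j k, P j k ↔ k = φ j := fun j k => ⟨fun h => hP j _ _ h (hφ j), (· ▸ hφ j)⟩
  refine ⟨φ, Finite.injective_iff_bijective.mp fun j j' hjj' => ?_, hφ⟩
  by_contra hne
  exact hdet (Matrix.det_zero_of_row_eq hne (funext fun k => by simp only [hA, hP_iff, hjj']))

section Flag

variable {α : Type*} {M : Matroid α} {p : ℕ} {i : Fin p → α}

/-- The paper's `F_k`, with `i` indexed from `0`: the closure of `i 0, …, i (k - 1)`. -/
def closureFlag (M : Matroid α) (i : Fin p → α) (k : ℕ) : Set α :=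
  M.closure (i '' {j | (j : ℕ) < k})

lemma closureFlag_mono : Monotone (closureFlag M i) := fun _ _ hkl =>
  M.closure_subset_closure (image_mono fun _ hj => lt_of_lt_of_le hj hkl)

lemma closureFlag_succ (k : Fin p) :
    closureFlag M i (k + 1) = M.closure (insert (i k) (i '' {j | j < k})) := by
  rw [closureFlag, ← image_insert_eq]
  congr 2
  ext j
  simp only [mem_ofPred_eq, mem_insert_iff, Fin.ext_iff, Fin.lt_def]
  omega

lemma apply_mem_closureFlag_succ_sdiff (hI : M.Indep (range i)) (hinj : Function.Injective i)
    (k : Fin p) : i k ∈ closureFlag M i (k + 1) \ closureFlag M i k := by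
  have hk : i k ∉ i '' {j | (j : ℕ) < k} := fun ⟨_, hj, hjk⟩ =>
    hj.ne (congrArg Fin.val (hinj hjk))
  refine ⟨M.subset_closure _ ((image_subset_range _ _).trans hI.subset_ground)
    ⟨k, Nat.lt_succ_self _, rfl⟩, fun hk_mem => ?_⟩
  exact hI.notMem_closure_sdiff_of_mem (mem_range_self k)
    (M.closure_subset_closure (subset_sdiff_singleton (image_subset_range _ _) hk) hk_mem)

lemma apply_mem_closureFlag_succ_sdiff_iff (hI : M.Indep (range i)) (hinj : Function.Injective i)
    (j k : Fin p) : i j ∈ closureFlag M i (k + 1) \ closureFlag M i k ↔ j = k := by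
  refine ⟨fun h => Fin.ext ?_, fun hjk => hjk ▸ apply_mem_closureFlag_succ_sdiff hI hinj j⟩
  exact closureFlag_mono.eq_of_mem_add_one_sdiff (apply_mem_closureFlag_succ_sdiff hI hinj j) h

variable [LinearOrder α]

lemma IsNBC.eq_apply_of_mem_closureFlag (hi : StrictAnti i) (hS : IsNBC M (range i))
    {i' : Fin p → α} (hS' : IsNBC M (range i')) {φ : Fin p → Fin p}
    (hφ : Function.Surjective φ)
    (hmem : ∀ j, i' j ∈ closureFlag M i (φ j + 1) \ closureFlag M i (φ j)) (j : Fin p) :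
    i' j = i (φ j) := by
  induction hk : φ j using WellFoundedLT.induction generalizing j with
  | ind k ih =>
    have hbelow : i '' {m | m < k} ⊆ range i' := by
      rintro _ ⟨m, hm, rfl⟩
      obtain ⟨j', rfl⟩ := hφ m
      exact ⟨j', ih _ hm j' rfl⟩
    have hj := hmem j
    rw [hk, closureFlag_succ] at hj
    exact hS.eq_of_mem_closure_insert hS' (finite_range i) (mem_range_self k)
      (image_subset_range _ _) (by rintro _ ⟨m, hm, rfl⟩; exact hi hm) (mem_range_self j)
      hbelow hj.1 hj.2

end Flag

theorem nbc_incidence_matrix_det_general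
    {α : Type*} [LinearOrder α] (M : Matroid α)
    (p : ℕ) (i : Fin p → α) (hi : StrictAnti i)
    (hS : IsNBC M (Set.range i))
    (F : ℕ → Set α) (hF : ∀ k : ℕ, F k = M.closure (i '' {j : Fin p | (j : ℕ) < k}))
    (i' : Fin p → α)
    (hS' : IsNBC M (Set.range i'))
    (A : Matrix (Fin p) (Fin p) ℤ)
    (hA : ∀ j k : Fin p,
      A j k = if i' j ∈ F ((k : ℕ) + 1) \ F (k : ℕ) then 1 else 0) :
    ((∀ j : Fin p, i' j = i j) → A = 1 ∧ A.det = 1) ∧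
      (Set.range i' ≠ Set.range i → A.det = 0) := by
  obtain rfl : F = closureFlag M i := funext hF
  refine ⟨fun h => ?_, fun hne => ?_⟩
  · have hA1 : A = 1 := by
      ext j k
      simp only [hA, h, apply_mem_closureFlag_succ_sdiff_iff (hS.indep_s9 (finite_range i))
        hi.injective, Matrix.one_apply]
    exact ⟨hA1, by rw [hA1, Matrix.det_one]⟩
  · by_contra hdet
    obtain ⟨φ, hφ, hmem⟩ := Matrix.exists_bijective_of_det_ne_zero
      (P := fun j k : Fin p => i' j ∈ closureFlag M i (k + 1) \ closureFlag M i k) hA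
      (fun j k l hk hl => Fin.ext (closureFlag_mono.eq_of_mem_add_one_sdiff hk hl)) hdet
    have hi'φ : i' = i ∘ φ := funext (hS.eq_apply_of_mem_closureFlag hi hS' hφ.surjective hmem)
    exact hne (by rw [hi'φ, hφ.surjective.range_comp])

/-- Let `S = {i₁ > … > i_p}` be an NBC-set of a loopless matroid `M`, let
`F_k = cl{i₁, …, i_k}`, and let `S' = {i'₁, …, i'_p}` be an NBC-set of size `p`.
Let `A` be the `p × p` integer matrix with `A(j,k) = 1` if `i'_j ∈ F_k ∖ F_{k−1}`
and `A(j,k) = 0` otherwise.  (a) If `i'_j = i_j` for all `j` then `A` is the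
identity matrix, so `det A = 1`.  (b) If `S' ≠ S` then `det A = 0`. -/
theorem nbc_incidence_matrix_det
    {α : Type*} [Fintype α] [LinearOrder α] (M : Matroid α)
    (hloopless : M.closure ∅ = ∅)
    (p : ℕ) (i : Fin p → α) (hi : StrictAnti i)
    (hS : IsNBC M (Set.range i))
    (F : ℕ → Set α) (hF : ∀ k : ℕ, F k = M.closure (i '' {j : Fin p | (j : ℕ) < k}))
    (i' : Fin p → α) (hi' : Function.Injective i')
    (hS' : IsNBC M (Set.range i'))
    (A : Matrix (Fin p) (Fin p) ℤ)
    (hA : ∀ j k : Fin p,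
      A j k = if i' j ∈ F ((k : ℕ) + 1) \ F (k : ℕ) then 1 else 0) :
    ((∀ j : Fin p, i' j = i j) → A = 1 ∧ A.det = 1) ∧
      (Set.range i' ≠ Set.range i → A.det = 0) :=
  nbc_incidence_matrix_det_general M p i hi hS F hF i' hS' A hA
end

section
/- Let M be a loopless matroid of rank d on a finite ground set E and let ℱ : ∅ = F₀ ⊊ F₁ ⊊ … ⊊ F_l = E be a flag of flats of M. Let G₀ ⊆ G₁ ⊆ … ⊆ G_d ⊆ E be a complete flag of flats of the initial matroid M_ℱ; concretely, suppose that for every j ∈ {0, …, d} and every i ∈ {1, …, l} the set F_{i−1} ∪ (G_j ∩ F_i) is a flat of M, and that Σ_{i=1}^{l} ( r(F_{i−1} ∪ (G_j ∩ F_i)) − r(F_{i−1}) ) = j for every j. Then there exist flats G'₀ ⊊ G'₁ ⊊ … ⊊ G'_d of M with r(G'_j) = j for every j, and a permutation σ of {1, …, d}, such that G'_j ∖ G'_{j−1} = G_{σ(j)} ∖ G_{σ(j)−1} for every 1 ≤ j ≤ d. -/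
/-!
The sets `H i j = F_{i-1} ∪ (G_j ∩ F_i)` are flats of `M` forming a single chain under inclusion,
ordered lexicographically in `(i, j)`. Since the `M_ℱ`-rank of `G_j` is `j`, passing from `G_j`
to `G_{j+1}` enlarges exactly one of them, `H (b j) j ⊂ H (b j) (j+1)`, raising its rank by one,
and the new elements are exactly `G_{j+1} \ G_j`. Nested flats of equal rank coincide, so these
`d` covers, listed by the rank of their bottom, are the successive steps of a complete flag of `M`.
-/

open Finset Set

noncomputable def mrank {α : Type*} (M : Matroid α) (X : Set α) : ℕ :=
  sSup {n : ℕ | ∃ I : Set α, M.Indep I ∧ I ⊆ X ∧ I.ncard = n}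

open Function

section MatroidRank

variable {α : Type*} [Finite α] {M : Matroid α} {I X Y : Set α}

lemma bddAbove_indep_ncard (M : Matroid α) (X : Set α) :
    BddAbove {n : ℕ | ∃ I : Set α, M.Indep I ∧ I ⊆ X ∧ I.ncard = n} :=
  ⟨Nat.card α, by rintro n ⟨I, -, -, rfl⟩; exact ncard_le_card I⟩

lemma exists_indep_subset_ncard_eq_mrank (M : Matroid α) (X : Set α) :
    ∃ I, M.Indep I ∧ I ⊆ X ∧ I.ncard = mrank M X :=
  Nat.sSup_mem (s := {n : ℕ | ∃ I : Set α, M.Indep I ∧ I ⊆ X ∧ I.ncard = n})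
    ⟨0, ∅, M.empty_indep, empty_subset X, ncard_empty α⟩ (bddAbove_indep_ncard M X)

lemma Matroid.Indep.ncard_le_mrank (hI : M.Indep I) (hIX : I ⊆ X) : I.ncard ≤ mrank M X :=
  le_csSup (bddAbove_indep_ncard M X) ⟨I, hI, hIX, rfl⟩

lemma mrank_mono (M : Matroid α) (h : X ⊆ Y) : mrank M X ≤ mrank M Y := by
  obtain ⟨I, hI, hIX, hcard⟩ := exists_indep_subset_ncard_eq_mrank M X
  exact hcard ▸ hI.ncard_le_mrank (hIX.trans h)

/-- A maximal independent subset of the flat `X` extends by any element of `Y \ X`. -/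
lemma Matroid.IsFlat.eq_of_subset_of_mrank_le (hX : M.IsFlat X) (hXY : X ⊆ Y)
    (hYE : Y ⊆ M.E) (hr : mrank M Y ≤ mrank M X) : X = Y := by
  refine hXY.antisymm fun y hy => by_contra fun hyX => ?_
  obtain ⟨I, hI, hIX, hcard⟩ := exists_indep_subset_ncard_eq_mrank M X
  have hyI : y ∉ I := fun h => hyX (hIX h)
  have hins : M.Indep (insert y I) := by
    refine (hI.insert_indep_iff_of_notMem hyI).2 ⟨hYE hy, fun hcl => hyX ?_⟩
    exact hX.closure ▸ M.closure_subset_closure hIX hcl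
  have hle := hins.ncard_le_mrank (insert_subset hy (hIX.trans hXY))
  rw [ncard_insert_of_notMem hyI I.toFinite, hcard] at hle
  omega

lemma Matroid.IsFlat.eq_of_mrank_eq_of_total (hX : M.IsFlat X) (hY : M.IsFlat Y)
    (htot : X ⊆ Y ∨ Y ⊆ X) (hr : mrank M X = mrank M Y) : X = Y := by
  rcases htot with h | h
  · exact hX.eq_of_subset_of_mrank_le h hY.subset_ground hr.ge
  · exact (hY.eq_of_subset_of_mrank_le h hX.subset_ground hr.le).symm

end MatroidRank

lemma Finset.exists_eq_add_one_of_sum_eq_sum_add_one {ι : Type*} {s : Finset ι} {f g : ι → ℕ}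
    (hle : ∀ i ∈ s, f i ≤ g i) (hsum : ∑ i ∈ s, g i = ∑ i ∈ s, f i + 1) :
    ∃ i₀ ∈ s, g i₀ = f i₀ + 1 ∧ ∀ i ∈ s, i ≠ i₀ → g i = f i := by
  classical
  obtain ⟨i₀, hi₀, hlt⟩ : ∃ i₀ ∈ s, f i₀ < g i₀ := by
    by_contra! h
    have := Finset.sum_le_sum h
    omega
  have hle' : ∀ i ∈ s.erase i₀, f i ≤ g i := fun i hi => hle i (mem_of_mem_erase hi)
  have hrest := Finset.sum_le_sum hle'
  have hg := Finset.add_sum_erase s g hi₀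
  have hf := Finset.add_sum_erase s f hi₀
  have hrest_eq := (Finset.sum_eq_sum_iff_of_le hle').1 (by omega)
  exact ⟨i₀, hi₀, by omega, fun i hi hne => (hrest_eq i (mem_erase.2 ⟨hne, hi⟩)).symm⟩

lemma pairwise_disjoint_sdiff_succ {α : Type*} {G : ℕ → Set α} {d : ℕ}
    (hG : MonotoneOn G (Set.Iic d)) :
    Pairwise (Disjoint on (fun j : Fin d => G (j + 1) \ G j)) := by
  refine (pairwise_disjoint_on _).2 fun j j' hjj' => ?_
  have hsub : G (j + 1) ⊆ G j' :=
    hG (Set.mem_Iic.2 (by omega)) (Set.mem_Iic.2 j'.2.le) (by omega)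
  exact disjoint_sdiff_right.mono_left (sdiff_subset.trans hsub)

section FlagLayer

variable {α : Type*} {F : ℕ → Set α} {l : ℕ}

/-- `F_{i-1} ∪ (S ∩ F_i)`: `S` is a flat of `M_ℱ` iff all of these are flats of `M`, and its
`M_ℱ`-rank is the sum of their ranks relative to `F_{i-1}`. -/
def flagLayer (F : ℕ → Set α) (i : ℕ) (S : Set α) : Set α := F (i - 1) ∪ (S ∩ F i)

lemma flagLayer_mono (F : ℕ → Set α) (i : ℕ) {S T : Set α} (h : S ⊆ T) :
    flagLayer F i S ⊆ flagLayer F i T :=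
  union_subset_union_right _ (inter_subset_inter_left _ h)

lemma flagLayer_subset (hF : MonotoneOn F (Set.Iic l)) {i : ℕ} (hi : i ≤ l) (S : Set α) :
    flagLayer F i S ⊆ F i :=
  union_subset (hF (Set.mem_Iic.2 (by omega)) (Set.mem_Iic.2 hi) (by omega)) inter_subset_right

lemma flagLayer_subset_flagLayer_of_lt (hF : MonotoneOn F (Set.Iic l)) {i i' : ℕ} (hii' : i < i')
    (hi' : i' ≤ l) (S T : Set α) : flagLayer F i S ⊆ flagLayer F i' T :=
  (flagLayer_subset hF (by omega) S).trans <|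
    (hF (Set.mem_Iic.2 (by omega)) (Set.mem_Iic.2 (by omega)) (by omega)).trans subset_union_left

lemma isChain_flagLayer (hF : MonotoneOn F (Set.Iic l)) {G : ℕ → Set α} {d : ℕ}
    (hG : MonotoneOn G (Set.Iic d)) :
    IsChain (· ⊆ ·) {X | ∃ i ∈ Finset.Icc 1 l, ∃ j ≤ d, flagLayer F i (G j) = X} := by
  rintro _ ⟨i, hi, j, hj, rfl⟩ _ ⟨i', hi', j', hj', rfl⟩ -
  have hil := (Finset.mem_Icc.1 hi).2
  have hil' := (Finset.mem_Icc.1 hi').2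
  rcases lt_trichotomy i i' with h | rfl | h
  · exact .inl (flagLayer_subset_flagLayer_of_lt hF h hil' _ _)
  · rcases le_total j j' with h | h
    · exact .inl (flagLayer_mono F i (hG (Set.mem_Iic.2 hj) (Set.mem_Iic.2 hj') h))
    · exact .inr (flagLayer_mono F i (hG (Set.mem_Iic.2 hj') (Set.mem_Iic.2 hj) h))
  · exact .inr (flagLayer_subset_flagLayer_of_lt hF h hil _ _)

/-- An element of `S \ T` shows up in the layer `i` of the first `F i` containing it. -/
lemma flagLayer_sdiff_flagLayer (hF0 : F 0 = ∅) {S T : Set α} (hS : S ⊆ F l) {b : ℕ}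
    (hb : ∀ i ∈ Finset.Icc 1 l, i ≠ b → flagLayer F i S = flagLayer F i T) :
    flagLayer F b S \ flagLayer F b T = S \ T := by
  classical
  ext x
  constructor
  · rintro ⟨hxF | ⟨hxS, hxb⟩, hxT⟩
    · exact absurd (Or.inl hxF) hxT
    · exact ⟨hxS, fun h => hxT (Or.inr ⟨h, hxb⟩)⟩
  · rintro ⟨hxS, hxT⟩
    have hex : ∃ n, x ∈ F n := ⟨l, hS hxS⟩
    have hxi : x ∈ F (Nat.find hex) := Nat.find_spec hex
    have hi0 : Nat.find hex ≠ 0 := fun h => by rw [h, hF0] at hxi; exact hxi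
    have hxi' : x ∉ F (Nat.find hex - 1) := Nat.find_min hex (by omega)
    have hmem : x ∈ flagLayer F (Nat.find hex) S \ flagLayer F (Nat.find hex) T :=
      ⟨.inr ⟨hxS, hxi⟩, by rintro (h | h); exacts [hxi' h, hxT h.1]⟩
    obtain rfl : Nat.find hex = b := by
      by_contra hne
      rw [hb _ (Finset.mem_Icc.2 ⟨by omega, Nat.find_le (hS hxS)⟩) hne] at hmem
      exact hmem.2 hmem.1
    exact hmem

lemma exists_flagLayer_mrank_step [Finite α] {M : Matroid α} {S T : Set α} (hTS : T ⊆ S)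
    (hT : ∀ i ∈ Finset.Icc 1 l, M.IsFlat (flagLayer F i T))
    (hS : ∀ i ∈ Finset.Icc 1 l, M.IsFlat (flagLayer F i S))
    (hsum : ∑ i ∈ Finset.Icc 1 l, (mrank M (flagLayer F i S) - mrank M (F (i - 1))) =
      ∑ i ∈ Finset.Icc 1 l, (mrank M (flagLayer F i T) - mrank M (F (i - 1))) + 1) :
    ∃ b ∈ Finset.Icc 1 l, mrank M (flagLayer F b S) = mrank M (flagLayer F b T) + 1 ∧
      ∀ i ∈ Finset.Icc 1 l, i ≠ b → flagLayer F i S = flagLayer F i T := by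
  have hmono : ∀ i, mrank M (flagLayer F i T) ≤ mrank M (flagLayer F i S) :=
    fun i => mrank_mono M (flagLayer_mono F i hTS)
  have hbase : ∀ i U, mrank M (F (i - 1)) ≤ mrank M (flagLayer F i U) :=
    fun i U => mrank_mono M subset_union_left
  obtain ⟨b, hb, hstep, hrest⟩ := Finset.exists_eq_add_one_of_sum_eq_sum_add_one
    (fun i _ => Nat.sub_le_sub_right (hmono i) _) hsum
  refine ⟨b, hb, by have := hbase b T; omega, fun i hi hne => ?_⟩
  -- the other layers are nested flats of equal rank
  refine ((hT i hi).eq_of_subset_of_mrank_le (flagLayer_mono F i hTS)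
    (hS i hi).subset_ground ?_).symm
  have := hrest i hi hne
  have := hbase i T
  omega

end FlagLayer

/-- The flag is read off the chain by rank; `σ⁻¹ j` is the rank of `A j`, which is injective
because the differences `B j \ A j` are nonempty and pairwise disjoint. -/
theorem exists_complete_flag_of_covers_in_chain {α : Type*} [Finite α] {M : Matroid α} {d : ℕ}
    (hd : mrank M M.E = d) {C : Set (Set α)} (hC : IsChain (· ⊆ ·) C)
    (hCflat : ∀ X ∈ C, M.IsFlat X) {A B : Fin d → Set α} (hA : ∀ j, A j ∈ C)
    (hB : ∀ j, B j ∈ C) (hcov : ∀ j, mrank M (B j) = mrank M (A j) + 1)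
    (hdisj : Pairwise (Disjoint on fun j => B j \ A j)) :
    ∃ (G' : ℕ → Set α) (σ : Equiv.Perm (Fin d)),
      (∀ j ≤ d, M.IsFlat (G' j)) ∧
      (∀ j < d, G' j ⊂ G' (j + 1)) ∧
      (∀ j ≤ d, mrank M (G' j) = j) ∧
      (∀ j : Fin d, G' ((j : ℕ) + 1) \ G' (j : ℕ) = B (σ j) \ A (σ j)) := by
  have hC' : IsChain (· ⊆ ·) (insert M.E C) :=
    hC.insert fun X hX _ => .inr (hCflat X hX).subset_ground
  have hC'flat : ∀ X ∈ insert M.E C, M.IsFlat X := by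
    rintro X (rfl | hX)
    exacts [M.ground_isFlat, hCflat X hX]
  have heq : ∀ X ∈ insert M.E C, ∀ Y ∈ insert M.E C, mrank M X = mrank M Y → X = Y :=
    fun X hX Y hY => (hC'flat X hX).eq_of_mrank_eq_of_total (hC'flat Y hY) (hC'.total hX hY)
  have hAB : ∀ j, A j ⊂ B j := by
    intro j
    have hne : A j ≠ B j := fun h => by have := hcov j; rw [h] at this; omega
    refine ((hC.total (hA j) (hB j)).resolve_right fun hBA => ?_).ssubset_of_ne hne
    have := mrank_mono M hBA
    have := hcov j
    omega
  have hlt : ∀ j, mrank M (A j) < d := fun j => by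
    have := mrank_mono M (hCflat _ (hB j)).subset_ground
    have := hcov j
    omega
  let τ : Fin d → Fin d := fun j => ⟨mrank M (A j), hlt j⟩
  have hτ : Injective τ := by
    intro j j' h
    have hA' : A j = A j' := heq _ (.inr (hA j)) _ (.inr (hA j')) (Fin.val_eq_of_eq h)
    have hB' : B j = B j' := heq _ (.inr (hB j)) _ (.inr (hB j')) (by rw [hcov, hcov, hA'])
    by_contra hne
    obtain ⟨x, hx⟩ := nonempty_of_ssubset (hAB j)
    have hx' : x ∈ B j' \ A j' := by rwa [← hA', ← hB']
    exact (hdisj hne).ne_of_mem hx hx' rfl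
  set σ := (Equiv.ofBijective τ (Finite.injective_iff_bijective.1 hτ)).symm
  have hτσ : ∀ k, mrank M (A (σ k)) = k :=
    fun k => congrArg Fin.val ((Equiv.ofBijective τ _).apply_symm_apply k)
  let G' : ℕ → Set α := fun k => if h : k < d then A (σ ⟨k, h⟩) else M.E
  have hG'A : ∀ k : Fin d, G' k = A (σ k) := fun k => dif_pos k.2
  have hG'mem : ∀ k, G' k ∈ insert M.E C := by
    intro k
    by_cases h : k < d
    · exact .inr (by rw [show G' k = _ from hG'A ⟨k, h⟩]; exact hA _)
    · exact .inl (dif_neg h)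
  have hG'rank : ∀ k ≤ d, mrank M (G' k) = k := by
    intro k hk
    rcases hk.lt_or_eq with h | rfl
    · exact (hG'A ⟨k, h⟩).symm ▸ hτσ ⟨k, h⟩
    · rw [show G' k = M.E from dif_neg (lt_irrefl k), hd]
  have hG'B : ∀ k : Fin d, G' (k + 1) = B (σ k) := fun k =>
    heq _ (hG'mem _) _ (.inr (hB _)) (by rw [hG'rank _ k.2, hcov, hτσ])
  refine ⟨G', σ, fun k _ => hC'flat _ (hG'mem k), fun k hk => ?_, hG'rank,
    fun k => by rw [hG'B, hG'A]⟩
  simpa only [← hG'A ⟨k, hk⟩, ← hG'B ⟨k, hk⟩] using hAB (σ ⟨k, hk⟩)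

theorem initial_matroid_flag_lift_general
    {α : Type*} [Fintype α] (M : Matroid α)
    (d : ℕ) (hd : mrank M M.E = d)
    (l : ℕ) (F : ℕ → Set α)
    (hF0 : F 0 = ∅) (hFl : F l = M.E)
    (hFmono : ∀ i < l, F i ⊂ F (i + 1))
    (G : ℕ → Set α)
    (hGE : ∀ j ≤ d, G j ⊆ M.E)
    (hGmono : ∀ j < d, G j ⊆ G (j + 1))
    (hGflat : ∀ j ≤ d, ∀ i : ℕ, 1 ≤ i → i ≤ l → M.IsFlat (F (i - 1) ∪ (G j ∩ F i)))
    (hGrank : ∀ j ≤ d,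
      ∑ i ∈ Finset.Icc 1 l,
        (mrank M (F (i - 1) ∪ (G j ∩ F i)) - mrank M (F (i - 1))) = j) :
    ∃ (G' : ℕ → Set α) (σ : Equiv.Perm (Fin d)),
      (∀ j ≤ d, M.IsFlat (G' j)) ∧
      (∀ j < d, G' j ⊂ G' (j + 1)) ∧
      (∀ j ≤ d, mrank M (G' j) = j) ∧
      (∀ j : Fin d,
        G' ((j : ℕ) + 1) \ G' (j : ℕ) = G ((σ j : ℕ) + 1) \ G (σ j : ℕ)) := by
  have hF : MonotoneOn F (Set.Iic l) := monotoneOn_of_le_add_one ordConnected_Iic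
    fun i _ _ hi => (hFmono i (Nat.lt_of_succ_le hi)).subset
  have hG : MonotoneOn G (Set.Iic d) := monotoneOn_of_le_add_one ordConnected_Iic
    fun j _ _ hj => hGmono j (Nat.lt_of_succ_le hj)
  have hlayer : ∀ j ≤ d, ∀ i ∈ Finset.Icc 1 l, M.IsFlat (flagLayer F i (G j)) :=
    fun j hj i hi => hGflat j hj i (Finset.mem_Icc.1 hi).1 (Finset.mem_Icc.1 hi).2
  have hstep (j : Fin d) := exists_flagLayer_mrank_step (hGmono j j.2) (hlayer j j.2.le)
    (hlayer (j + 1) j.2) ((hGrank (j + 1) j.2).trans (congrArg (· + 1) (hGrank j j.2.le)).symm)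
  choose b hb hcov hrest using hstep
  have hsdiff (j : Fin d) : flagLayer F (b j) (G (j + 1)) \ flagLayer F (b j) (G j) =
      G (j + 1) \ G j := flagLayer_sdiff_flagLayer hF0 (hFl ▸ hGE (j + 1) j.2) (hrest j)
  obtain ⟨G', σ, hflat, hssub, hrank, hdiff⟩ := exists_complete_flag_of_covers_in_chain hd
    (isChain_flagLayer hF hG) (by rintro _ ⟨i, hi, j, hj, rfl⟩; exact hlayer j hj i hi)
    (fun j => ⟨b j, hb j, j, j.2.le, rfl⟩) (fun j => ⟨b j, hb j, j + 1, j.2, rfl⟩) hcov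
    (by simpa only [hsdiff] using pairwise_disjoint_sdiff_succ hG)
  exact ⟨G', σ, hflat, hssub, hrank, fun j => (hdiff j).trans (hsdiff (σ j))⟩

/-- Any complete flag of flats `G₀ ⊆ … ⊆ G_d` of the initial matroid `M_ℱ` of a flag
of flats `ℱ : ∅ = F₀ ⊊ … ⊊ F_l = E` of a loopless matroid `M` of rank `d` can be
lifted: there is a complete flag of flats `G'₀ ⊊ … ⊊ G'_d` of `M` and a permutation
`σ` of `{1, …, d}` with `G'_j ∖ G'_{j−1} = G_{σ(j)} ∖ G_{σ(j)−1}` for all `j`.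
Here being a flat of `M_ℱ` is expressed by `F_{i−1} ∪ (G_j ∩ F_i)` being a flat of `M`
for every `i`, and the rank of `G_j` in `M_ℱ`, namely
`Σ_{i=1}^{l} (r(F_{i−1} ∪ (G_j ∩ F_i)) − r(F_{i−1}))`, being `j`. -/
theorem initial_matroid_flag_lift
    {α : Type*} [Fintype α] (M : Matroid α)
    (hloopless : M.closure ∅ = ∅)
    (d : ℕ) (hd : mrank M M.E = d)
    (l : ℕ) (F : ℕ → Set α)
    (hF0 : F 0 = ∅) (hFl : F l = M.E)
    (hFflat : ∀ i ≤ l, M.IsFlat (F i))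
    (hFmono : ∀ i < l, F i ⊂ F (i + 1))
    (G : ℕ → Set α)
    (hGE : ∀ j ≤ d, G j ⊆ M.E)
    (hGmono : ∀ j < d, G j ⊆ G (j + 1))
    (hGflat : ∀ j ≤ d, ∀ i : ℕ, 1 ≤ i → i ≤ l → M.IsFlat (F (i - 1) ∪ (G j ∩ F i)))
    (hGrank : ∀ j ≤ d,
      ∑ i ∈ Finset.Icc 1 l,
        (mrank M (F (i - 1) ∪ (G j ∩ F i)) - mrank M (F (i - 1))) = j) :
    ∃ (G' : ℕ → Set α) (σ : Equiv.Perm (Fin d)),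
      (∀ j ≤ d, M.IsFlat (G' j)) ∧
      (∀ j < d, G' j ⊂ G' (j + 1)) ∧
      (∀ j ≤ d, mrank M (G' j) = j) ∧
      (∀ j : Fin d,
        G' ((j : ℕ) + 1) \ G' (j : ℕ) = G ((σ j : ℕ) + 1) \ G (σ j : ℕ)) :=
  initial_matroid_flag_lift_general M d hd l F hF0 hFl hFmono G hGE hGmono hGflat hGrank
end
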